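/- arXiv:math/0608776 — 9 statements merged into one kernel-verified Lean document; each statement's English description precedes it below -/
import Mathlib

section
/- For all positive integers m and ν, the number of n-colour compositions of ν into exactly m parts equals the binomial coefficient C(ν+m-1, 2m-1). -/
open Finset

/-- An n-colour composition of `ν` is a list of pairs `(p, c)` with `1 ≤ c ≤ p`
whose parts `p` sum to `ν`. -/
def IsNColourComposition (ν : ℕ) (l : List (ℕ × ℕ)) : Prop :=
  (∀ pc ∈ l, 1 ≤ pc.2 ∧ pc.2 ≤ pc.1) ∧ (l.map Prod.fst).sum = ν

/-- Finset of n-colour compositions of `ν` with `m` parts. -/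
def NCC : ℕ → ℕ → Finset (List (ℕ × ℕ))
  | 0, ν => if ν = 0 then {[]} else ∅
  | m + 1, ν => (Icc 1 ν).biUnion fun p => (Icc 1 p).biUnion fun c =>
      (NCC m (ν - p)).image (List.cons (p, c))

lemma mem_NCC : ∀ m ν (l : List (ℕ × ℕ)),
    l ∈ NCC m ν ↔ IsNColourComposition ν l ∧ l.length = m := by
  intro m
  induction m with
  | zero =>
    intro ν l
    simp only [NCC]
    constructor
    · intro hl
      split at hl
      · simp only [mem_singleton] at hl
        subst hl
        refine ⟨⟨by simp, by simp [*]⟩, rfl⟩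
      · simp at hl
    · rintro ⟨⟨_, hsum⟩, hlen⟩
      obtain rfl : l = [] := List.length_eq_zero_iff.mp hlen
      simp at hsum
      simp [← hsum]
  | succ m ih =>
    intro ν l
    simp only [NCC, mem_biUnion, mem_image, mem_Icc]
    constructor
    · rintro ⟨p, ⟨hp1, hpν⟩, c, ⟨hc1, hcp⟩, t, ht, rfl⟩
      obtain ⟨⟨hcol, hsum⟩, hlen⟩ := (ih _ t).mp ht
      refine ⟨⟨?_, ?_⟩, by simp [hlen]⟩
      · rintro pc hpc
        rcases List.mem_cons.mp hpc with rfl | h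
        · exact ⟨hc1, hcp⟩
        · exact hcol pc h
      · simp only [List.map_cons, List.sum_cons, hsum]
        omega
    · rintro ⟨⟨hcol, hsum⟩, hlen⟩
      match l with
      | (p, c) :: t =>
        obtain ⟨hc1, hcp⟩ := hcol (p, c) List.mem_cons_self
        simp only [List.map_cons, List.sum_cons] at hsum
        simp only [List.length_cons, Nat.add_right_cancel_iff] at hlen
        have hpν : p ≤ ν := by omega
        refine ⟨p, ⟨by omega, hpν⟩, c, ⟨hc1, hcp⟩, t, (ih _ t).mpr ⟨⟨?_, ?_⟩, hlen⟩, rfl⟩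
        · exact fun pc hpc => hcol pc (List.mem_cons_of_mem _ hpc)
        · omega

lemma card_NCC_succ (m ν : ℕ) :
    (NCC (m + 1) ν).card = ∑ p ∈ Icc 1 ν, p * (NCC m (ν - p)).card := by
  show ((Icc 1 ν).biUnion fun p => (Icc 1 p).biUnion fun c =>
      (NCC m (ν - p)).image (List.cons (p, c))).card = _
  rw [card_biUnion]
  · refine Finset.sum_congr rfl fun p hp => ?_
    rw [card_biUnion]
    · rw [Finset.sum_congr rfl fun c _ =>
        Finset.card_image_of_injective (NCC m (ν - p)) List.cons_injective]
      simp [mul_comm]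
    · intro c₁ h₁ c₂ h₂ hne
      rw [Function.onFun_apply, Finset.disjoint_left]
      rintro x hx₁ hx₂
      simp only [mem_image] at hx₁ hx₂
      obtain ⟨t₁, _, rfl⟩ := hx₁
      obtain ⟨t₂, _, h⟩ := hx₂
      exact hne (by injection (List.head_eq_of_cons_eq h).symm)
  · intro p₁ h₁ p₂ h₂ hne
    rw [Function.onFun_apply, Finset.disjoint_left]
    rintro x hx₁ hx₂
    simp only [mem_biUnion, mem_image] at hx₁ hx₂
    obtain ⟨c₁, _, t₁, _, rfl⟩ := hx₁
    obtain ⟨c₂, _, t₂, _, h⟩ := hx₂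
    have := List.head_eq_of_cons_eq h
    exact hne (congrArg Prod.fst this).symm

/-- Hockey stick. -/
lemma hs (r a : ℕ) (h : a ≤ r) :
    ∀ n, ∑ q ∈ range n, (q + a).choose r = (n + a).choose (r + 1) := by
  intro n
  induction n with
  | zero => simp [Nat.choose_eq_zero_of_lt (lt_of_le_of_lt h (Nat.lt_succ_self r))]
  | succ n ihn =>
    rw [Finset.sum_range_succ, ihn, show n + 1 + a = (n + a) + 1 by omega,
      Nat.choose_succ_succ' (n + a) r]
    omega

lemma swap_sum (g : ℕ → ℕ) : ∀ ν, ∑ q ∈ range ν, (ν - q) * g q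
    = ∑ j ∈ range ν, ∑ q ∈ range (j + 1), g q := by
  intro ν
  induction ν with
  | zero => simp
  | succ ν ih =>
    rw [Finset.sum_range_succ (fun j => ∑ q ∈ range (j + 1), g q), ← ih,
      Finset.sum_range_succ (fun q => (ν + 1 - q) * g q),
      Finset.sum_range_succ (fun q => g q)]
    have h1 : ∑ q ∈ range ν, (ν + 1 - q) * g q
        = ∑ q ∈ range ν, ((ν - q) * g q + g q) := by
      refine Finset.sum_congr rfl fun q hq => ?_
      have hq' : q < ν := mem_range.mp hq
      rw [show ν + 1 - q = (ν - q) + 1 by omega, add_mul, one_mul]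
    rw [h1, Finset.sum_add_distrib, show ν + 1 - ν = 1 from by omega, one_mul]
    omega

lemma reindex (m r ν : ℕ) :
    ∑ p ∈ Icc 1 ν, p * (ν - p + m).choose r
      = ∑ q ∈ range ν, (ν - q) * (q + m).choose r := by
  refine Finset.sum_nbij' (fun p => ν - p) (fun q => ν - q) ?_ ?_ ?_ ?_ ?_
  · intro p hp; simp only [mem_Icc] at hp; simp only [mem_range]; omega
  · intro q hq; simp only [mem_range] at hq; simp only [mem_Icc]; omega
  · intro p hp; simp only [mem_Icc] at hp; show ν - (ν - p) = p; omega
  · intro q hq; simp only [mem_range] at hq; show ν - (ν - q) = q; omega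
  · intro p hp; simp only [mem_Icc] at hp
    show p * (ν - p + m).choose r = (ν - (ν - p)) * ((ν - p) + m).choose r
    rw [show ν - (ν - p) = p by omega]

lemma key (m ν : ℕ) :
    ∑ p ∈ Icc 1 ν, p * (ν - p + m).choose (2 * m + 1) = (ν + m + 1).choose (2 * m + 3) := by
  rw [reindex m (2 * m + 1) ν, swap_sum (fun q => (q + m).choose (2 * m + 1)) ν]
  have h1 : ∀ j ∈ range ν, (∑ q ∈ range (j + 1), (q + m).choose (2 * m + 1))
      = (j + (m + 1)).choose (2 * m + 2) := by
    intro j _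
    rw [hs (2 * m + 1) m (by omega) (j + 1)]
    congr 1
    omega
  rw [Finset.sum_congr rfl h1, hs (2 * m + 2) (m + 1) (by omega) ν]
  congr 1 <;> omega

lemma card_NCC (m : ℕ) : ∀ ν, (NCC (m + 1) ν).card = (ν + m).choose (2 * m + 1) := by
  induction m with
  | zero =>
    intro ν
    rw [card_NCC_succ]
    have h0 : ∀ k, (NCC 0 k).card = if k = 0 then 1 else 0 := by
      intro k; simp only [NCC]; split <;> simp
    rw [Finset.sum_congr rfl fun p _ => by rw [h0]]
    rw [Finset.sum_eq_single ν]
    · rcases Nat.eq_zero_or_pos ν with rfl | hν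
      · simp
      · simp
    · intro b hb hne
      simp only [mem_Icc] at hb
      rw [if_neg (by omega)]
      simp
    · intro hν
      simp only [mem_Icc] at hν
      have : ν = 0 := by omega
      subst this
      simp
  | succ m ih =>
    intro ν
    rw [card_NCC_succ]
    rw [Finset.sum_congr rfl fun p _ => by rw [ih]]
    rw [key m ν]
    congr 1 <;> omega

theorem ncolour_compositions_with_m_parts (m ν : ℕ) (hm : 1 ≤ m) (hν : 1 ≤ ν) :
    Nat.card {l : List (ℕ × ℕ) // IsNColourComposition ν l ∧ l.length = m} =
      Nat.choose (ν + m - 1) (2 * m - 1) := by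
  have e : {l : List (ℕ × ℕ) // IsNColourComposition ν l ∧ l.length = m}
      ≃ {l : List (ℕ × ℕ) // l ∈ NCC m ν} :=
    Equiv.subtypeEquivRight fun l => (mem_NCC m ν l).symm
  rw [Nat.card_congr e, Nat.card_eq_finsetCard]
  obtain ⟨m', rfl⟩ : ∃ m', m = m' + 1 := ⟨m - 1, by omega⟩
  rw [card_NCC m' ν]
  congr 1 <;> omega
end

section
/- For every positive integer ν, the total number of n-colour compositions of ν equals the Fibonacci number F_{2ν} (with F_0 = 0, F_1 = 1, F_n = F_{n-1} + F_{n-2}). -/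
/-!
Splitting off the first pair `(p, c)` shows that the number `a n` of n-colour compositions of `n`
satisfies `a 0 = 1` and `a (n + 1) = ∑_{i + j = n} (i + 1) * a j`. Comparing this convolution at
`n + 1` and `n` gives `a (n + 2) = a (n + 1) + ∑_{k ≤ n + 1} a k`, and then `a (n + 1) = F (2n + 2)`
and `∑_{k ≤ n} a k = F (2n + 1)` follow together by induction.
-/

open Finset

theorem isNColourComposition_nil_iff {n : ℕ} : IsNColourComposition n [] ↔ n = 0 := by
  simp [IsNColourComposition, eq_comm]

theorem isNColourComposition_cons_iff {n p c : ℕ} {l : List (ℕ × ℕ)} :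
    IsNColourComposition n ((p, c) :: l) ↔
      1 ≤ c ∧ c ≤ p ∧ p ≤ n ∧ IsNColourComposition (n - p) l := by
  simp only [IsNColourComposition, List.forall_mem_cons, List.map_cons, List.sum_cons]
  constructor
  · rintro ⟨⟨hc, hl⟩, hsum⟩
    exact ⟨hc.1, hc.2, by omega, hl, by omega⟩
  · rintro ⟨hc₁, hc₂, hp, hl, hsum⟩
    exact ⟨⟨⟨hc₁, hc₂⟩, hl⟩, by omega⟩

def nColourCompositions : ℕ → Finset (List (ℕ × ℕ))
  | 0 => {[]}
  | n + 1 => ((range (n + 1)).sigma fun i => Icc 1 (i + 1) ×ˢ nColourCompositions (n - i)).image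
      fun x => (x.1 + 1, x.2.1) :: x.2.2

theorem mem_nColourCompositions {n : ℕ} {l : List (ℕ × ℕ)} :
    l ∈ nColourCompositions n ↔ IsNColourComposition n l := by
  induction n using Nat.strong_induction_on generalizing l with
  | _ n ih =>
    rcases l with _ | ⟨⟨p, c⟩, l⟩
    · cases n <;> simp [nColourCompositions, isNColourComposition_nil_iff]
    cases n with
    | zero =>
      simp only [nColourCompositions, mem_singleton, reduceCtorEq, false_iff,
        isNColourComposition_cons_iff]
      omega
    | succ n =>
      simp only [nColourCompositions, mem_image, mem_sigma, mem_range, mem_product, mem_Icc,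
        Sigma.exists, Prod.exists, List.cons.injEq, Prod.mk.injEq, isNColourComposition_cons_iff]
      constructor
      · rintro ⟨i, c, l, ⟨hi, ⟨hc₁, hc₂⟩, hl⟩, ⟨rfl, rfl⟩, rfl⟩
        refine ⟨hc₁, hc₂, by omega, ?_⟩
        rwa [Nat.add_sub_add_right, ← ih (n - i) (by omega)]
      · rintro ⟨hc₁, hc₂, hp, hl⟩
        have hrest : n - (p - 1) = n + 1 - p := by omega
        refine ⟨p - 1, c, l, ⟨by omega, ⟨hc₁, by omega⟩, ?_⟩, ⟨by omega, rfl⟩, rfl⟩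
        rwa [ih _ (by omega), hrest]

theorem card_nColourCompositions_succ (n : ℕ) :
    #(nColourCompositions (n + 1)) =
      ∑ x ∈ antidiagonal n, (x.1 + 1) * #(nColourCompositions x.2) := by
  rw [nColourCompositions, card_image_of_injective, card_sigma,
    Nat.sum_antidiagonal_eq_sum_range_succ fun i j => (i + 1) * #(nColourCompositions j)]
  · simp [Nat.card_Icc, mul_comm]
  · rintro ⟨i, c, l⟩ ⟨i', c', l'⟩ h
    simp only [List.cons.injEq, Prod.mk.injEq, Nat.add_right_cancel_iff] at h
    obtain ⟨⟨rfl, rfl⟩, rfl⟩ := h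
    rfl

theorem sum_antidiagonal_snd_eq_sum_range {M : Type*} [AddCommMonoid M] (f : ℕ → M) (n : ℕ) :
    ∑ x ∈ antidiagonal n, f x.2 = ∑ k ∈ range (n + 1), f k := by
  rw [← Nat.sum_antidiagonal_swap]
  exact Nat.sum_antidiagonal_eq_sum_range_succ (fun i _ => f i) n

theorem succ_eq_fib_of_convolution_recurrence {a : ℕ → ℕ} (h0 : a 0 = 1)
    (hsucc : ∀ n, a (n + 1) = ∑ x ∈ antidiagonal n, (x.1 + 1) * a x.2) (n : ℕ) :
    a (n + 1) = Nat.fib (2 * n + 2) := by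
  have hstep (n : ℕ) : a (n + 2) = a (n + 1) + ∑ k ∈ range (n + 2), a k := by
    simp only [hsucc (n + 1), add_one_mul, sum_add_distrib, sum_antidiagonal_snd_eq_sum_range]
    rw [Nat.sum_antidiagonal_succ, hsucc n]
    simp
  suffices ∀ n, a (n + 1) = Nat.fib (2 * n + 2) ∧ ∑ k ∈ range (n + 1), a k = Nat.fib (2 * n + 1)
    from (this n).1
  intro n
  induction n with
  | zero => simp [hsucc, h0]
  | succ n ih =>
    obtain ⟨ha, hsum⟩ := ih
    have hsum' : ∑ k ∈ range (n + 2), a k = Nat.fib (2 * n + 3) := by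
      rw [sum_range_succ, hsum, ha]
      exact Nat.fib_add_two.symm
    refine ⟨?_, hsum'⟩
    rw [hstep, ha, hsum']
    exact Nat.fib_add_two.symm

theorem ncolour_compositions_eq_fib (ν : ℕ) (hν : 1 ≤ ν) :
    Nat.card {l : List (ℕ × ℕ) // IsNColourComposition ν l} = Nat.fib (2 * ν) := by
  obtain ⟨n, rfl⟩ := Nat.exists_eq_add_of_le' hν
  simp_rw [← mem_nColourCompositions]
  rw [Nat.card_eq_finsetCard]
  exact succ_eq_fib_of_convolution_recurrence (a := fun n => #(nColourCompositions n))
    (by simp [nColourCompositions]) card_nColourCompositions_succ n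
end

section
/- For all integers m > 1 and ν ≥ 1, the number of n-colour self-inverse compositions of 2ν into exactly 2m−1 parts equals Σ_{l=1}^{ν−1} 2l·C(ν+m−l−2, 2m−3). -/
open Finset

def ncc : ℕ → ℕ → Finset (List (ℕ × ℕ))
  | N, 0 => if N = 0 then {([] : List (ℕ × ℕ))} else ∅
  | N, (k+1) => ((Finset.Icc 1 N ×ˢ Finset.Icc 1 N).filter fun pc => pc.2 ≤ pc.1).biUnion
      fun pc => (ncc (N - pc.1) k).image (List.cons pc)

lemma mem_ncc : ∀ (k N : ℕ) (l : List (ℕ × ℕ)),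
    l ∈ ncc N k ↔ IsNColourComposition N l ∧ l.length = k := by
  intro k
  induction k with
  | zero =>
    intro N l
    simp only [ncc, IsNColourComposition]
    split
    · next h =>
        subst h; simp only [Finset.mem_singleton]
        constructor
        · rintro rfl; simp
        · rintro ⟨⟨-, h2⟩, h3⟩; rw [List.length_eq_zero_iff] at h3; exact h3
    · next h =>
      simp only [Finset.notMem_empty, false_iff]
      rintro ⟨⟨-, h2⟩, h3⟩
      rw [List.length_eq_zero_iff] at h3; subst h3; simp at h2; exact h (h2.symm)
  | succ k ih =>
    intro N l
    simp only [ncc, Finset.mem_biUnion, Finset.mem_filter, Finset.mem_image, Finset.mem_product,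
      Finset.mem_Icc]
    constructor
    · rintro ⟨pc, ⟨⟨⟨hp1, hpN⟩, _, _⟩, hcp⟩, t, ht, rfl⟩
      obtain ⟨⟨hcol, hsum⟩, hlen⟩ := (ih (N - pc.1) t).1 ht
      refine ⟨⟨?_, ?_⟩, by simp [hlen]⟩
      · rintro qc hqc
        rcases List.mem_cons.1 hqc with rfl | hq
        · exact ⟨by omega, hcp⟩
        · exact hcol qc hq
      · simp only [List.map_cons, List.sum_cons, hsum]; omega
    · rintro ⟨⟨hcol, hsum⟩, hlen⟩
      rcases l with _ | ⟨pc, t⟩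
      · simp at hlen
      · simp only [List.map_cons, List.sum_cons] at hsum
        simp only [List.length_cons, Nat.add_right_cancel_iff] at hlen
        have hc := hcol pc (List.mem_cons_self)
        have hp1 : 1 ≤ pc.1 := le_trans hc.1 hc.2
        have htcol : ∀ qc ∈ t, 1 ≤ qc.2 ∧ qc.2 ≤ qc.1 := fun qc hq => hcol qc (List.mem_cons_of_mem _ hq)
        refine ⟨pc, ⟨⟨⟨hp1, by omega⟩, ⟨hc.1, by omega⟩⟩, hc.2⟩, t, ?_, rfl⟩
        exact (ih _ t).2 ⟨⟨htcol, by omega⟩, hlen⟩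

lemma card_ncc_succ (N k : ℕ) :
    (ncc N (k+1)).card = ∑ p ∈ Finset.Icc 1 N, p * (ncc (N - p) k).card := by
  show ((((Finset.Icc 1 N ×ˢ Finset.Icc 1 N).filter fun pc => pc.2 ≤ pc.1).biUnion
      fun pc => (ncc (N - pc.1) k).image (List.cons pc))).card = _
  rw [Finset.card_biUnion]
  · rw [Finset.sum_congr rfl
      (fun pc _ => Finset.card_image_of_injective (ncc (N - pc.1) k) (List.cons_injective))]
    rw [Finset.sum_filter, Finset.sum_product]
    apply Finset.sum_congr rfl
    intro p hp
    rw [← Finset.sum_filter]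
    have hfil : Finset.filter (fun c => c ≤ p) (Finset.Icc 1 N) = Finset.Icc 1 p := by
      have hpN := (Finset.mem_Icc.mp hp).2
      ext c; simp only [Finset.mem_filter, Finset.mem_Icc]; omega
    rw [hfil]
    simp [mul_comm]
  · intro x hx y hy hxy
    simp only [Finset.disjoint_left, Finset.mem_image]
    rintro a ⟨t, ht, rfl⟩ ⟨s, hs, heq⟩
    exact hxy ((List.cons_eq_cons.mp heq).1.symm)

lemma sum_range_choose_shift (M a r : ℕ) (ha : a ≤ r) :
    ∑ j ∈ Finset.range M, (j + a).choose r = (M + a).choose (r + 1) := by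
  induction M with
  | zero => simp [Nat.choose_eq_zero_of_lt (by omega : a < r + 1)]
  | succ M ih =>
    rw [Finset.sum_range_succ, ih, show M + 1 + a = (M + a) + 1 by ring,
      Nat.choose_succ_succ']
    omega

lemma key_sum (k r : ℕ) (hr : k ≤ r) : ∀ N : ℕ,
    ∑ j ∈ Finset.range N, (N - j) * (j + k).choose r = (N + k + 1).choose (r + 2) := by
  intro N
  induction N with
  | zero => simp [Nat.choose_eq_zero_of_lt (by omega : k + 1 < r + 2)]
  | succ N ih =>
    have h1 : ∑ j ∈ Finset.range (N+1), (N + 1 - j) * (j + k).choose r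
        = ∑ j ∈ Finset.range (N+1), (N - j) * (j + k).choose r
          + ∑ j ∈ Finset.range (N+1), (j + k).choose r := by
      rw [← Finset.sum_add_distrib]
      apply Finset.sum_congr rfl
      intro j hj
      have hjN : j ≤ N := Nat.lt_succ_iff.mp (Finset.mem_range.mp hj)
      have h2 : N + 1 - j = (N - j) + 1 := by omega
      rw [h2]; ring
    rw [h1, Finset.sum_range_succ, Nat.sub_self, zero_mul, add_zero, ih,
      sum_range_choose_shift (N+1) k r hr]
    have hpas : (N + 1 + k + 1).choose (r + 2)
        = (N + k + 1).choose (r + 1) + (N + k + 1).choose (r + 2) := by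
      rw [show N + 1 + k + 1 = (N + k + 1) + 1 by ring, Nat.choose_succ_succ']
    rw [hpas, show N + 1 + k = N + k + 1 by ring]
    omega

lemma card_ncc (k : ℕ) : ∀ N, (ncc N (k+1)).card = (N + k).choose (2 * k + 1) := by
  induction k with
  | zero =>
    intro N
    rw [card_ncc_succ]
    have h : ∀ p ∈ Finset.Icc 1 N, p * (ncc (N - p) 0).card = if p = N then p else 0 := by
      intro p hp
      have hp' := Finset.mem_Icc.mp hp
      show p * (if N - p = 0 then ({([] : List (ℕ × ℕ))} : Finset _) else ∅).card = _
      by_cases hpN : p = N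
      · subst hpN; simp
      · rw [if_neg (by omega), if_neg hpN]; simp
    rw [Finset.sum_congr rfl h, Finset.sum_ite_eq' (Finset.Icc 1 N) N (fun p => p)]
    rcases Nat.eq_zero_or_pos N with rfl | hN
    · simp
    · rw [if_pos (Finset.mem_Icc.mpr ⟨hN, le_refl N⟩), Nat.choose_one_right]
      omega
  | succ k ih =>
    intro N
    rw [card_ncc_succ]
    rw [Finset.sum_congr rfl (fun p (hp : p ∈ Finset.Icc 1 N) => by rw [ih (N - p)])]
    have hre : ∑ p ∈ Finset.Icc 1 N, p * ((N - p) + k).choose (2 * k + 1)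
        = ∑ j ∈ Finset.range N, (N - j) * (j + k).choose (2 * k + 1) := by
      apply Finset.sum_nbij' (fun p => N - p) (fun j => N - j)
      · intro p hp
        have := Finset.mem_Icc.mp hp
        simp only [Finset.mem_range]; omega
      · intro j hj
        have := Finset.mem_range.mp hj
        simp only [Finset.mem_Icc]; omega
      · intro p hp; have := Finset.mem_Icc.mp hp; omega
      · intro j hj; have := Finset.mem_range.mp hj; omega
      · intro p hp
        have := Finset.mem_Icc.mp hp
        have h2 : N - (N - p) = p := by omega
        rw [h2]
    rw [hre, key_sum k (2*k+1) (by omega) N]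
    congr 1 <;> omega

lemma list_length_le_sum : ∀ (L : List ℕ), (∀ x ∈ L, 1 ≤ x) → L.length ≤ L.sum := by
  intro L
  induction L with
  | nil => simp
  | cons a t ih =>
    intro h
    have h1 := h a (List.mem_cons_self)
    have h2 := ih (fun x hx => h x (List.mem_cons_of_mem _ hx))
    simp only [List.length_cons, List.sum_cons]
    omega

lemma pal_inj (mid : ℕ × ℕ) :
    Function.Injective (fun fr : List (ℕ × ℕ) => fr ++ mid :: fr.reverse) := by
  intro a b h
  simp only at h
  have hlen : a.length = b.length := by
    have := congrArg List.length h
    simp only [List.length_append, List.length_cons, List.length_reverse] at this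
    omega
  exact List.append_inj_left h hlen

theorem selfinverse_even_number_odd_parts (m ν : ℕ) (hm : 1 < m) (hν : 1 ≤ ν) :
    Nat.card {l : List (ℕ × ℕ) //
        IsNColourComposition (2 * ν) l ∧ l.reverse = l ∧ l.length = 2 * m - 1} =
      ∑ l ∈ Finset.Icc 1 (ν - 1), 2 * l * Nat.choose (ν + m - l - 2) (2 * m - 3) := by
  classical
  set F : Finset (List (ℕ × ℕ)) :=
    ((Finset.Icc 1 (ν-1)).sigma fun l => Finset.Icc 1 (2*l)).biUnion
      (fun x => (ncc (ν - x.1) (m-1)).image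
        (fun fr => fr ++ (2*x.1, x.2) :: fr.reverse)) with hF
  have hmem : ∀ L : List (ℕ × ℕ),
      L ∈ F ↔ IsNColourComposition (2*ν) L ∧ L.reverse = L ∧ L.length = 2*m-1 := by
    intro L
    rw [hF]
    simp only [Finset.mem_biUnion, Finset.mem_sigma, Finset.mem_image, Finset.mem_Icc]
    constructor
    · rintro ⟨x, ⟨⟨hl1, hl2⟩, hc1, hc2⟩, fr, hfr, rfl⟩
      obtain ⟨⟨hcol, hsum⟩, hflen⟩ := (mem_ncc _ _ fr).1 hfr
      refine ⟨⟨?_, ?_⟩, ?_, ?_⟩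
      · intro pc hpc
        rcases List.mem_append.1 hpc with h | h
        · exact hcol pc h
        · rcases List.mem_cons.1 h with rfl | h
          · exact ⟨hc1, hc2⟩
          · exact hcol pc (List.mem_reverse.1 h)
      · simp only [List.map_append, List.map_cons, List.sum_append, List.sum_cons,
          List.map_reverse, List.sum_reverse, hsum]
        omega
      · simp [List.reverse_append]
      · simp only [List.length_append, List.length_cons, List.length_reverse, hflen]
        omega
    · rintro ⟨⟨hcol, hsum⟩, hrev, hlen⟩
      set k := m - 1 with hk
      have hk1 : 1 ≤ k := by omega
      have hlen' : L.length = 2*k+1 := by omega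
      set fr := L.take k with hfr
      have hfrlen : fr.length = k := by
        rw [hfr, List.length_take]; omega
      have hdne : L.drop k ≠ [] := by
        intro h
        have := congrArg List.length h
        simp only [List.length_drop, hlen', List.length_nil] at this
        omega
      obtain ⟨mid, bk, hrest⟩ := List.exists_cons_of_ne_nil hdne
      have hL : L = fr ++ mid :: bk := by
        rw [hfr, ← hrest, List.take_append_drop]
      have hbklen : bk.length = k := by
        have := congrArg List.length hL
        simp only [List.length_append, List.length_cons, hlen', hfrlen] at this
        omega
      have hbk : bk = fr.reverse := by
        have h1 : L.reverse = bk.reverse ++ mid :: fr.reverse := by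
          rw [hL]
          simp [List.reverse_append]
        rw [hrev, hL] at h1
        have h2 := List.append_inj_left h1.symm (by simp [hfrlen, hbklen])
        rw [← h2, List.reverse_reverse]
      obtain ⟨p, c⟩ := mid
      have hmidmem : (p, c) ∈ L := by
        rw [hL]; exact List.mem_append_right _ (List.mem_cons_self)
      have hpc := hcol _ hmidmem
      have hfrcol : ∀ pc ∈ fr, 1 ≤ pc.2 ∧ pc.2 ≤ pc.1 := by
        intro pc hpcmem
        exact hcol pc (by rw [hL]; exact List.mem_append_left _ hpcmem)
      set s := (fr.map Prod.fst).sum with hs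
      have hsum' : s + (p + s) = 2 * ν := by
        rw [hL] at hsum
        simpa only [List.map_append, List.map_cons, List.sum_append, List.sum_cons, hbk,
          List.map_reverse, List.sum_reverse] using hsum
      have hsge : k ≤ s := by
        have := list_length_le_sum (fr.map Prod.fst) (by
          intro x hx
          obtain ⟨pc, hpcm, rfl⟩ := List.mem_map.1 hx
          have := hfrcol pc hpcm
          omega)
        simpa [hfrlen] using this
      have hp1 : 1 ≤ p := by omega
      have hps : p = 2 * (ν - s) := by omega
      refine ⟨⟨ν - s, c⟩, ⟨⟨show 1 ≤ ν - s by omega, show ν - s ≤ ν - 1 by omega⟩,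
        show 1 ≤ c by omega, show c ≤ 2 * (ν - s) by omega⟩, fr, ?_, ?_⟩
      · refine (mem_ncc _ _ fr).2 ⟨⟨hfrcol, show (fr.map Prod.fst).sum = ν - (ν - s) by omega⟩,
          hfrlen⟩
      · show fr ++ (2 * (ν - s), c) :: fr.reverse = L
        rw [hL, hbk, hps]
  have hset : {L : List (ℕ × ℕ) |
      IsNColourComposition (2*ν) L ∧ L.reverse = L ∧ L.length = 2*m-1} = ↑F := by
    ext L
    simp only [Set.mem_setOf_eq, Finset.coe_sort_coe, Finset.mem_coe, hmem]
  have h1 : Nat.card {l : List (ℕ × ℕ) //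
      IsNColourComposition (2 * ν) l ∧ l.reverse = l ∧ l.length = 2 * m - 1} = F.card := by
    rw [Nat.card_congr (Equiv.subtypeEquivRight (fun L => (hmem L).symm)),
      Nat.card_eq_finsetCard]
  rw [h1, hF, Finset.card_biUnion]
  · rw [Finset.sum_congr rfl (fun x _ =>
      Finset.card_image_of_injective (ncc (ν - x.1) (m-1)) (pal_inj (2*x.1, x.2)))]
    rw [Finset.sum_sigma]
    apply Finset.sum_congr rfl
    intro l hl
    have hl' := Finset.mem_Icc.mp hl
    have hm1 : m - 1 = (m - 2) + 1 := by omega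
    rw [hm1]
    simp only [Finset.sum_const, Nat.card_Icc, smul_eq_mul, Nat.add_sub_cancel]
    rw [card_ncc (m-2) (ν - l)]
    have harg1 : ν - l + (m-2) = ν + m - l - 2 := by omega
    have harg2 : 2 * (m-2) + 1 = 2 * m - 3 := by omega
    rw [harg1, harg2]
  · intro x hx y hy hxy
    simp only [Finset.disjoint_left, Finset.mem_image]
    rintro L ⟨fr, hfr, rfl⟩ ⟨fr', hfr', heq⟩
    obtain ⟨-, hflen⟩ := (mem_ncc _ _ fr).1 hfr
    obtain ⟨-, hflen'⟩ := (mem_ncc _ _ fr').1 hfr'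
    have hfe : fr' = fr := List.append_inj_left heq (by rw [hflen, hflen'])
    subst hfe
    have h2 := List.append_inj_right heq (rfl)
    simp only [List.cons.injEq, Prod.mk.injEq] at h2
    apply hxy
    exact Sigma.ext (by omega) (by simpa using h2.1.2.symm)
end

section
/- For every integer ν ≥ 1, the total number of n-colour self-inverse compositions of 2ν−1 equals (2ν−1) + Σ_{m=2}^{ν} Σ_{l=1}^{ν−1} (2l−1)·C(ν+m−l−2, 2m−3). -/
open Finset

private lemma icc_insert_bot' (a b : ℕ) (h : a ≤ b) : Icc a b = insert a (Icc (a+1) b) := by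
  ext x; simp [mem_Icc]; omega

/-- `g j = fib (2j)` and `h j = fib (2j+1)` where `g`, `h` are binomial sums. -/
private theorem g_h_fib (j : ℕ) :
    (∑ m ∈ Icc 1 j, Nat.choose (j + m - 1) (2 * m - 1)) = Nat.fib (2 * j) ∧
    (∑ m ∈ Icc 1 (j + 1), Nat.choose (j + m - 1) (2 * m - 2)) = Nat.fib (2 * j + 1) := by
  induction j with
  | zero => simp
  | succ j ih =>
    obtain ⟨hg, hh⟩ := ih
    have hg' : (∑ m ∈ Icc 1 (j + 1), Nat.choose (j + 1 + m - 1) (2 * m - 1))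
        = Nat.fib (2 * (j + 1)) := by
      have : ∀ m ∈ Icc 1 (j + 1), Nat.choose (j + 1 + m - 1) (2 * m - 1)
          = Nat.choose (j + m - 1) (2 * m - 2) + Nat.choose (j + m - 1) (2 * m - 1) := by
        intro m hm
        simp only [mem_Icc] at hm
        rw [show j + 1 + m - 1 = (j + m - 1) + 1 by omega,
          show 2 * m - 1 = (2 * m - 2) + 1 by omega, Nat.choose_succ_succ]
      rw [sum_congr rfl this, sum_add_distrib, hh]
      have : (∑ m ∈ Icc 1 (j + 1), Nat.choose (j + m - 1) (2 * m - 1))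
          = ∑ m ∈ Icc 1 j, Nat.choose (j + m - 1) (2 * m - 1) := by
        rw [Finset.sum_Icc_succ_top (by omega : 1 ≤ j + 1)]
        have : Nat.choose (j + (j+1) - 1) (2 * (j+1) - 1) = 0 := by
          apply Nat.choose_eq_zero_of_lt; omega
        omega
      rw [this, hg, show 2 * (j + 1) = (2 * j) + 1 + 1 by ring, Nat.fib_add_two]
      ring
    refine ⟨hg', ?_⟩
    have key : ∀ m ∈ Icc 2 (j + 2), Nat.choose (j + 1 + m - 1) (2 * m - 2)
        = Nat.choose (j + m - 1) (2 * m - 3) + Nat.choose (j + m - 1) (2 * m - 2) := by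
      intro m hm
      simp only [mem_Icc] at hm
      rw [show j + 1 + m - 1 = (j + m - 1) + 1 by omega,
        show 2 * m - 2 = (2 * m - 3) + 1 by omega, Nat.choose_succ_succ]
    have split : (∑ m ∈ Icc 1 (j + 2), Nat.choose (j + 1 + m - 1) (2 * m - 2))
        = 1 + ∑ m ∈ Icc 2 (j + 2), Nat.choose (j + 1 + m - 1) (2 * m - 2) := by
      rw [icc_insert_bot' 1 (j+2) (by omega), sum_insert (by simp [mem_Icc])]
      norm_num
    rw [split, sum_congr rfl key, sum_add_distrib]
    have e1 : (∑ m ∈ Icc 2 (j + 2), Nat.choose (j + m - 1) (2 * m - 3))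
        = ∑ m ∈ Icc 1 (j + 1), Nat.choose (j + 1 + m - 1) (2 * m - 1) := by
      apply Finset.sum_nbij' (fun m => m - 1) (fun m => m + 1) <;>
        (intro a ha; simp only [mem_Icc] at *; first | omega | (congr 1 <;> omega))
    have e2 : (∑ m ∈ Icc 2 (j + 2), Nat.choose (j + m - 1) (2 * m - 2))
        = (∑ m ∈ Icc 1 (j + 1), Nat.choose (j + m - 1) (2 * m - 2)) - 1 := by
      rw [icc_insert_bot' 1 (j+1) (by omega), sum_insert (by simp [mem_Icc])]
      rw [Finset.sum_Icc_succ_top (by omega : 2 ≤ j + 2)]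
      have h0 : Nat.choose (j + (j + 1 + 1) - 1) (2 * (j + 1 + 1) - 2) = 0 := by
        apply Nat.choose_eq_zero_of_lt; omega
      rw [h0]
      simp
    rw [e1, e2, hg', hh]
    have hle : 1 ≤ Nat.fib (2 * j + 1) := Nat.fib_pos.mpr (by omega)
    have hF : Nat.fib (2 * (j + 1) + 1) = Nat.fib (2 * j + 1) + Nat.fib (2 * (j + 1)) := by
      rw [show 2 * (j + 1) + 1 = (2 * j + 1) + 2 by ring, Nat.fib_add_two]
      congr 2 <;> ring
    omega

private theorem sum_fib_even (j : ℕ) :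
    (∑ q ∈ Icc 1 j, Nat.fib (2 * q)) + 1 = Nat.fib (2 * j + 1) := by
  induction j with
  | zero => simp
  | succ j ih =>
    rw [Finset.sum_Icc_succ_top (by omega : 1 ≤ j + 1)]
    rw [show 2 * (j+1) + 1 = (2*j+1)+1+1 by ring, Nat.fib_add_two,
      show 2*(j+1) = (2*j)+1+1 by ring, Nat.fib_add_two]
    omega

private theorem fib_conv (j : ℕ) :
    Nat.fib (2 * (j + 1)) = (j + 1) + ∑ p ∈ Icc 1 j, p * Nat.fib (2 * (j + 1 - p)) := by
  induction j with
  | zero => simp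
  | succ j ih =>
    have shift : (∑ p ∈ Icc 1 (j+1), p * Nat.fib (2 * (j + 2 - p)))
        = Nat.fib (2*(j+1)) + ((∑ p ∈ Icc 1 j, p * Nat.fib (2 * (j + 1 - p)))
            + ∑ q ∈ Icc 1 j, Nat.fib (2 * q)) := by
      rw [icc_insert_bot' 1 (j+1) (by omega), sum_insert (by simp [mem_Icc])]
      have h1 : (∑ p ∈ Icc 2 (j+1), p * Nat.fib (2 * (j + 2 - p)))
          = ∑ p ∈ Icc 1 j, (p+1) * Nat.fib (2 * (j + 1 - p)) := by
        apply Finset.sum_nbij' (fun p => p - 1) (fun p => p + 1) <;>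
          (intro a ha; simp only [mem_Icc] at *; first | omega | (congr 2 <;> omega))
      have h2 : (∑ p ∈ Icc 1 j, (p+1) * Nat.fib (2 * (j + 1 - p)))
          = (∑ p ∈ Icc 1 j, p * Nat.fib (2 * (j + 1 - p)))
            + ∑ p ∈ Icc 1 j, Nat.fib (2 * (j+1-p)) := by
        rw [← sum_add_distrib]; apply sum_congr rfl; intros; ring
      have h3 : (∑ p ∈ Icc 1 j, Nat.fib (2 * (j+1-p))) = ∑ q ∈ Icc 1 j, Nat.fib (2 * q) := by
        apply Finset.sum_nbij' (fun p => j + 1 - p) (fun q => j + 1 - q) <;>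
          (intro a ha; simp only [mem_Icc] at *; try omega)
      rw [h1, h2, h3]
      norm_num
    show Nat.fib (2 * (j + 2)) = (j + 2) + ∑ p ∈ Icc 1 (j+1), p * Nat.fib (2 * (j + 2 - p))
    rw [shift]
    have hs := sum_fib_even j
    have hC : Nat.fib (2 * (j + 2)) = Nat.fib (2 * (j + 1)) + Nat.fib (2 * (j + 1) + 1) := by
      rw [show 2 * (j + 2) = 2 * (j + 1) + 2 by ring, Nat.fib_add_two]
    have hB : Nat.fib (2 * (j + 1) + 1) = Nat.fib (2 * j + 1) + Nat.fib (2 * (j + 1)) := by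
      rw [show 2 * (j + 1) + 1 = (2 * j + 1) + 2 by ring, Nat.fib_add_two]
      congr 2 <;> ring
    omega

/-- The finset of n-colour compositions of `n`. -/
def compFinset : ℕ → Finset (List (ℕ × ℕ))
  | 0 => {[]}
  | (n+1) => (Finset.Icc 1 (n+1)).biUnion fun p =>
      (Finset.Icc 1 p).biUnion fun c =>
        (compFinset (n - (p - 1))).image (List.cons (p, c))
decreasing_by omega

theorem mem_compFinset (n : ℕ) (l : List (ℕ × ℕ)) :
    l ∈ compFinset n ↔ IsNColourComposition n l := by
  induction n using Nat.strong_induction_on generalizing l with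
  | _ n ih =>
    match n with
    | 0 =>
      simp only [compFinset, Finset.mem_singleton, IsNColourComposition]
      constructor
      · rintro rfl; simp
      · rintro ⟨hc, hs⟩
        cases l with
        | nil => rfl
        | cons x t =>
          exfalso
          have := hc x (by simp)
          simp at hs
          omega
    | (n+1) =>
      simp only [compFinset, Finset.mem_biUnion, Finset.mem_image, Finset.mem_Icc]
      constructor
      · rintro ⟨p, hp, c, hc, t, ht, rfl⟩
        have hrec := (ih (n - (p - 1)) (by omega) t).mp ht
        obtain ⟨hcol, hsum⟩ := hrec
        refine ⟨?_, ?_⟩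
        · rintro pc hpc
          rcases List.mem_cons.mp hpc with rfl | h
          · exact ⟨hc.1, hc.2⟩
          · exact hcol pc h
        · simp [hsum]; omega
      · rintro ⟨hcol, hsum⟩
        cases l with
        | nil => simp at hsum
        | cons x t =>
          obtain ⟨p, c⟩ := x
          have hx := hcol (p, c) (by simp)
          simp only [List.map_cons, List.sum_cons] at hsum
          refine ⟨p, ⟨by omega, by omega⟩, c, ⟨hx.1, hx.2⟩, t, ?_, rfl⟩
          refine (ih (n - (p - 1)) (by omega) t).mpr ⟨fun pc h => hcol pc (by simp [h]), ?_⟩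
          omega

/-- The counting function for n-colour compositions. -/
def fcomp : ℕ → ℕ
  | 0 => 1
  | (n+1) => ∑ p ∈ Finset.Icc 1 (n+1), p * fcomp (n - (p - 1))
decreasing_by omega

theorem card_compFinset (n : ℕ) : (compFinset n).card = fcomp n := by
  induction n using Nat.strong_induction_on with
  | _ n ih =>
    match n with
    | 0 => simp [compFinset, fcomp]
    | (n+1) =>
      rw [compFinset, fcomp]
      rw [Finset.card_biUnion]
      · apply Finset.sum_congr rfl
        intro p hp
        rw [Finset.card_biUnion]
        · rw [show (∑ c ∈ Finset.Icc 1 p, ((compFinset (n - (p-1))).image (List.cons (p, c))).card)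
              = ∑ c ∈ Finset.Icc 1 p, (compFinset (n - (p-1))).card from
            Finset.sum_congr rfl fun c _ => Finset.card_image_of_injective _
              (fun a b h => by injection h)]
          simp only [Finset.mem_Icc] at hp
          rw [Finset.sum_const, Nat.card_Icc]
          rw [ih (n - (p - 1)) (by omega)]
          simp [Nat.smul_one_eq_cast]
        · intro c₁ h₁ c₂ h₂ hne
          simp only [Finset.disjoint_left, Finset.mem_image]
          rintro l ⟨t₁, _, rfl⟩ ⟨t₂, _, heq⟩
          injection heq with h1 _
          injection h1 with _ hcc
          exact hne hcc.symm
      · intro p₁ h₁ p₂ h₂ hne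
        simp only [Finset.disjoint_left, Finset.mem_biUnion, Finset.mem_image]
        rintro l ⟨c₁, _, t₁, _, rfl⟩ ⟨c₂, _, t₂, _, heq⟩
        injection heq with h1 _
        injection h1 with hpp _
        exact hne hpp.symm

theorem fcomp_eq_fib (n : ℕ) (hn : 1 ≤ n) : fcomp n = Nat.fib (2 * n) := by
  induction n using Nat.strong_induction_on with
  | _ n ih =>
    match n with
    | 0 => omega
    | (m+1) =>
      rw [fcomp, Finset.sum_Icc_succ_top (by omega : 1 ≤ m + 1)]
      have hterm : ∀ p ∈ Icc 1 m, p * fcomp (m - (p - 1)) = p * Nat.fib (2 * (m + 1 - p)) := by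
        intro p hp
        simp only [mem_Icc] at hp
        rw [show m - (p - 1) = m + 1 - p by omega,
          ih (m + 1 - p) (by omega) (by omega)]
      rw [sum_congr rfl hterm, show m - (m + 1 - 1) = 0 by omega]
      rw [fib_conv m]
      simp [fcomp]
      ring

private lemma middle_inj {a b : List (ℕ × ℕ)} {x y : ℕ × ℕ}
    (h : a ++ x :: a.reverse = b ++ y :: b.reverse) : a = b ∧ x = y := by
  have hlen : a.length = b.length := by
    have := congrArg List.length h
    simp at this
    omega
  obtain ⟨h1, h2⟩ := List.append_inj h hlen
  injection h2 with h3 _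
  exact ⟨h1, h3⟩

theorem pal_decomp (l : List (ℕ × ℕ)) (hp : List.Palindrome l)
    (ho : Odd (l.map Prod.fst).sum) : ∃ a x, l = a ++ x :: a.reverse := by
  revert ho
  induction hp with
  | nil => intro ho; simp [Nat.odd_iff] at ho
  | singleton x => exact fun _ => ⟨[], x, rfl⟩
  | @cons_concat x m hl ih =>
    intro ho
    have ho' : Odd (m.map Prod.fst).sum := by
      simp only [List.map_cons, List.map_append, List.sum_cons, List.sum_append,
        List.map_nil, List.sum_nil] at ho ⊢
      rw [Nat.odd_iff] at ho ⊢
      omega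
    obtain ⟨a, y, rfl⟩ := ih ho'
    exact ⟨x :: a, y, by simp⟩

/-- The finset of self-inverse n-colour compositions of `2ν - 1`. -/
def palFinset (ν : ℕ) : Finset (List (ℕ × ℕ)) :=
  (Finset.Icc 1 ν).biUnion fun k =>
    (Finset.Icc 1 (2 * k - 1)).biUnion fun c =>
      (compFinset (ν - k)).image fun a => a ++ (2 * k - 1, c) :: a.reverse

theorem mem_palFinset (ν : ℕ) (hν : 1 ≤ ν) (l : List (ℕ × ℕ)) :
    l ∈ palFinset ν ↔ IsNColourComposition (2 * ν - 1) l ∧ l.reverse = l := by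
  simp only [palFinset, Finset.mem_biUnion, Finset.mem_image, Finset.mem_Icc]
  constructor
  · rintro ⟨k, hk, c, hc, a, ha, rfl⟩
    obtain ⟨hcol, hsum⟩ := (mem_compFinset _ a).mp ha
    refine ⟨⟨?_, ?_⟩, ?_⟩
    · intro pc hpc
      simp only [List.mem_append, List.mem_cons, List.mem_reverse] at hpc
      rcases hpc with h | h | h
      · exact hcol pc h
      · subst h; exact ⟨hc.1, by simp; omega⟩
      · exact hcol pc h
    · simp only [List.map_append, List.map_cons, List.sum_append, List.sum_cons,
        List.map_reverse, List.sum_reverse, hsum]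
      omega
    · simp
  · rintro ⟨⟨hcol, hsum⟩, hrev⟩
    have hodd : Odd (l.map Prod.fst).sum := by
      rw [hsum, Nat.odd_iff]; omega
    obtain ⟨a, ⟨p, c⟩, rfl⟩ := pal_decomp l (List.Palindrome.of_reverse_eq hrev) hodd
    have hpc := hcol (p, c) (by simp)
    simp only [] at hpc
    simp only [List.map_append, List.map_cons, List.sum_append, List.sum_cons,
      List.map_reverse, List.sum_reverse] at hsum
    set S := (a.map Prod.fst).sum with hS
    refine ⟨ν - S, ⟨by omega, by omega⟩, c, ⟨hpc.1, by omega⟩, a, ?_, ?_⟩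
    · refine (mem_compFinset _ a).mpr ⟨fun pc h => hcol pc (by simp [h]), ?_⟩
      omega
    · have hp : 2 * (ν - S) - 1 = p := by omega
      rw [hp]

theorem card_palFinset (ν : ℕ) :
    (palFinset ν).card = ∑ k ∈ Icc 1 ν, (2 * k - 1) * fcomp (ν - k) := by
  rw [palFinset, Finset.card_biUnion]
  · apply Finset.sum_congr rfl
    intro k hk
    rw [Finset.card_biUnion]
    · rw [show (∑ c ∈ Finset.Icc 1 (2*k-1),
            ((compFinset (ν - k)).image fun a => a ++ (2*k-1, c) :: a.reverse).card)
          = ∑ c ∈ Finset.Icc 1 (2*k-1), (compFinset (ν - k)).card from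
        Finset.sum_congr rfl fun c _ => Finset.card_image_of_injective _
          (fun a b h => (middle_inj h).1)]
      rw [Finset.sum_const, Nat.card_Icc, card_compFinset]
      simp [Nat.smul_one_eq_cast]
    · intro c₁ h₁ c₂ h₂ hne
      simp only [Finset.disjoint_left, Finset.mem_image]
      rintro l ⟨t₁, _, rfl⟩ ⟨t₂, _, heq⟩
      obtain ⟨_, hxy⟩ := middle_inj heq
      injection hxy with _ hcc
      exact hne hcc.symm
  · intro k₁ h₁ k₂ h₂ hne
    simp only [Finset.mem_coe, Finset.mem_Icc] at h₁ h₂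
    simp only [Finset.disjoint_left, Finset.mem_biUnion, Finset.mem_image]
    rintro l ⟨c₁, _, t₁, _, rfl⟩ ⟨c₂, _, t₂, _, heq⟩
    obtain ⟨_, hxy⟩ := middle_inj heq
    injection hxy with hpp _
    exact hne (by omega)

theorem selfinverse_odd_number_total (ν : ℕ) (hν : 1 ≤ ν) :
    Nat.card {l : List (ℕ × ℕ) //
        IsNColourComposition (2 * ν - 1) l ∧ l.reverse = l} =
      (2 * ν - 1) + ∑ m ∈ Finset.Icc 2 ν, ∑ l ∈ Finset.Icc 1 (ν - 1),
        (2 * l - 1) * Nat.choose (ν + m - l - 2) (2 * m - 3) := by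
  obtain ⟨w, rfl⟩ : ∃ w, ν = w + 1 := ⟨ν - 1, by omega⟩
  -- LHS equals the card of palFinset
  have hcard : Nat.card {l : List (ℕ × ℕ) //
      IsNColourComposition (2 * (w + 1) - 1) l ∧ l.reverse = l} = (palFinset (w + 1)).card := by
    have hset : {l : List (ℕ × ℕ) | IsNColourComposition (2 * (w + 1) - 1) l ∧ l.reverse = l}
        = ↑(palFinset (w + 1)) := by
      ext l
      simp only [Set.mem_setOf_eq, Finset.coe_sort_coe, Finset.mem_coe]
      exact (mem_palFinset (w + 1) (by omega) l).symm
    rw [show Nat.card {l : List (ℕ × ℕ) //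
        IsNColourComposition (2 * (w + 1) - 1) l ∧ l.reverse = l}
      = Nat.card {l : List (ℕ × ℕ) | IsNColourComposition (2 * (w + 1) - 1) l ∧ l.reverse = l}
      from rfl]
    rw [Nat.card_coe_set_eq, hset, Set.ncard_coe_finset]
  rw [hcard, card_palFinset]
  -- evaluate the LHS sum
  rw [Finset.sum_Icc_succ_top (by omega : 1 ≤ w + 1)]
  have hL : ∀ k ∈ Icc 1 w, (2 * k - 1) * fcomp (w + 1 - k)
      = (2 * k - 1) * Nat.fib (2 * (w + 1 - k)) := by
    intro k hk
    simp only [mem_Icc] at hk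
    rw [fcomp_eq_fib (w + 1 - k) (by omega)]
  rw [sum_congr rfl hL, show w + 1 - (w + 1) = 0 by omega]
  -- evaluate the RHS double sum
  have hR : (∑ m ∈ Finset.Icc 2 (w + 1), ∑ l ∈ Finset.Icc 1 (w + 1 - 1),
        (2 * l - 1) * Nat.choose (w + 1 + m - l - 2) (2 * m - 3))
      = ∑ l ∈ Icc 1 w, (2 * l - 1) * Nat.fib (2 * (w + 1 - l)) := by
    rw [show w + 1 - 1 = w by omega, Finset.sum_comm]
    apply Finset.sum_congr rfl
    intro l hl
    simp only [mem_Icc] at hl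
    rw [← Finset.mul_sum]
    congr 1
    have step1 : (∑ m ∈ Finset.Icc 2 (w + 1), Nat.choose (w + 1 + m - l - 2) (2 * m - 3))
        = ∑ m ∈ Finset.Icc 1 w, Nat.choose ((w + 1 - l) + m - 1) (2 * m - 1) := by
      apply Finset.sum_nbij' (fun m => m - 1) (fun m => m + 1) <;>
        (intro a ha; simp only [mem_Icc] at *; first | omega | (congr 1 <;> omega))
    rw [step1]
    have step2 : (∑ m ∈ Finset.Icc 1 w, Nat.choose ((w + 1 - l) + m - 1) (2 * m - 1))
        = ∑ m ∈ Finset.Icc 1 (w + 1 - l), Nat.choose ((w + 1 - l) + m - 1) (2 * m - 1) := by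
      symm
      apply Finset.sum_subset
      · intro x hx; simp only [mem_Icc] at *; omega
      · intro x hx hnx
        simp only [mem_Icc] at hx hnx
        apply Nat.choose_eq_zero_of_lt
        omega
    rw [step2, (g_h_fib (w + 1 - l)).1]
  rw [hR]
  simp [fcomp]
  ring
end

section
/- Let a_n denote the number of n-colour self-inverse compositions of 2n+1. Then a_0 = 1, a_1 = 4, and a_n + a_{n−2} = 3·a_{n−1} for all n ≥ 2. -/
/-- Finset of all n-colour compositions of `ν`. -/
def compF : ℕ → Finset (List (ℕ × ℕ))
  | 0 => {[]}
  | (ν+1) => (Finset.range (ν+1)).biUnion fun p =>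
      (Finset.Icc 1 (p+1)).biUnion fun c =>
        (compF (ν - p)).image fun l => (p+1, c) :: l
  decreasing_by omega

theorem mem_compF (ν : ℕ) (l : List (ℕ × ℕ)) :
    l ∈ compF ν ↔ IsNColourComposition ν l := by
  induction ν using Nat.strong_induction_on generalizing l with
  | _ ν ih =>
    match ν with
    | 0 =>
      simp only [compF, Finset.mem_singleton, IsNColourComposition]
      constructor
      · rintro rfl; simp
      · rintro ⟨h1, h2⟩
        cases l with
        | nil => rfl
        | cons x t =>
          have hx := h1 x List.mem_cons_self
          simp only [List.map_cons, List.sum_cons] at h2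
          omega
    | ν + 1 =>
      simp only [compF, Finset.mem_biUnion, Finset.mem_range, Finset.mem_Icc,
        Finset.mem_image]
      constructor
      · rintro ⟨p, hp, c, hc, t, ht, rfl⟩
        rw [ih (ν - p) (by omega)] at ht
        obtain ⟨ht1, ht2⟩ := ht
        refine ⟨?_, ?_⟩
        · intro pc hpc
          rcases List.mem_cons.mp hpc with rfl | h
          · exact ⟨hc.1, hc.2⟩
          · exact ht1 pc h
        · simp only [List.map_cons, List.sum_cons, ht2]; omega
      · rintro ⟨h1, h2⟩
        cases l with
        | nil => simp at h2
        | cons x t =>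
          obtain ⟨q, c⟩ := x
          have hx := h1 (q, c) List.mem_cons_self
          simp only [List.map_cons, List.sum_cons] at h2
          simp only at hx
          refine ⟨q - 1, by omega, c, by omega, t, ?_, by
            congr 1; simp; omega⟩
          rw [ih (ν - (q-1)) (by omega)]
          exact ⟨fun pc h => h1 pc (List.mem_cons_of_mem _ h), by omega⟩

/-- Number of n-colour compositions of `ν`. -/
def Cc (ν : ℕ) : ℕ := (compF ν).card
/-- Partial sums of `Cc`. -/
def Ss (n : ℕ) : ℕ := ∑ q ∈ Finset.range (n+1), Cc q
/-- Number of self-inverse n-colour compositions of `2n+1` (as a sum). -/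
def Aa (n : ℕ) : ℕ := ∑ j ∈ Finset.range (n+1), (2*j+1) * Cc (n - j)

theorem card_compF (ν : ℕ) :
    Cc (ν+1) = ∑ p ∈ Finset.range (ν+1), (p+1) * Cc (ν - p) := by
  show (compF (ν+1)).card = _
  rw [show compF (ν+1) = (Finset.range (ν+1)).biUnion fun p =>
      (Finset.Icc 1 (p+1)).biUnion fun c =>
        (compF (ν - p)).image fun l => (p+1, c) :: l from by rw [compF]]
  rw [Finset.card_biUnion]
  · refine Finset.sum_congr rfl fun p hp => ?_
    rw [Finset.card_biUnion]
    · rw [Finset.sum_congr rfl fun c hc =>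
        Finset.card_image_of_injective _ (fun a b h => by injection h)]
      simp [Nat.card_Icc, mul_comm, Cc]
    · intro c hc c' hc' hne
      simp only [Finset.disjoint_left, Finset.mem_image]
      rintro l ⟨u, hu, rfl⟩ ⟨v, hv, hl⟩
      injection hl with h1 h2
      injection h1 with h h'
      exact hne h'.symm
  · intro p hp p' hp' hne
    simp only [Finset.disjoint_left, Finset.mem_biUnion, Finset.mem_image]
    rintro l ⟨c, hc, u, hu, rfl⟩ ⟨c', hc', v, hv, hl⟩
    injection hl with h1 h2
    injection h1 with h h'
    omega

/-- Finset of all self-inverse n-colour compositions of `2n+1`. -/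
def sInvF (n : ℕ) : Finset (List (ℕ × ℕ)) :=
  (Finset.range (n+1)).biUnion fun j =>
    (Finset.Icc 1 (2*j+1)).biUnion fun c =>
      (compF (n - j)).image fun u => u ++ (2*j+1, c) :: u.reverse

theorem mem_sInvF (n : ℕ) (l : List (ℕ × ℕ)) :
    l ∈ sInvF n ↔ IsNColourComposition (2*n+1) l ∧ l.reverse = l := by
  simp only [sInvF, Finset.mem_biUnion, Finset.mem_range, Finset.mem_Icc,
    Finset.mem_image]
  constructor
  · rintro ⟨j, hj, c, hc, u, hu, rfl⟩
    rw [mem_compF] at hu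
    obtain ⟨hu1, hu2⟩ := hu
    refine ⟨⟨?_, ?_⟩, ?_⟩
    · intro pc hpc
      rcases List.mem_append.mp hpc with h | h
      · exact hu1 pc h
      · rcases List.mem_cons.mp h with rfl | h
        · exact hc
        · exact hu1 pc (List.mem_reverse.mp h)
    · simp only [List.map_append, List.sum_append, List.map_cons, List.sum_cons,
        List.map_reverse, List.sum_reverse, hu2]
      omega
    · simp [List.reverse_append]
  · rintro ⟨⟨h1, h2⟩, hr⟩
    set L := l.length with hL
    set k := L / 2 with hk
    have hdrop : ∀ m, l.drop m = (l.take (L - m)).reverse := by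
      intro m
      conv_lhs => rw [← hr]
      rw [List.drop_reverse]
    have hsum : ∀ m, ((l.take m).map Prod.fst).sum + ((l.drop m).map Prod.fst).sum
        = 2*n+1 := by
      intro m
      rw [← h2]
      rw [← List.sum_append, ← List.map_append, List.take_append_drop]
    have hodd : L % 2 = 1 := by
      by_contra h
      have hL2 : L = 2 * k := by omega
      have := hsum k
      rw [hdrop k, show L - k = k by omega] at this
      rw [List.map_reverse, List.sum_reverse] at this
      omega
    have hkL : k < L := by omega
    have hkl : k < l.length := hkL
    set u := l.take k with hu
    set m := l[k] with hm
    have hdk : l.drop (k+1) = u.reverse := by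
      rw [hdrop (k+1), show L - (k+1) = k by omega]
    have hsplit : l = u ++ m :: u.reverse := by
      conv_lhs => rw [← List.take_append_drop k l]
      rw [List.drop_eq_getElem_cons hkl, hdk]
    have hmem : m ∈ l := List.getElem_mem hkl
    have hmc := h1 m hmem
    have husum : (u.map Prod.fst).sum + m.1 + (u.map Prod.fst).sum = 2*n+1 := by
      have := h2
      rw [hsplit] at this
      simp only [List.map_append, List.sum_append, List.map_cons, List.sum_cons,
        List.map_reverse, List.sum_reverse] at this
      omega
    set su := (u.map Prod.fst).sum with hsu
    have hsun : su ≤ n := by omega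
    refine ⟨n - su, by omega, m.2, by omega, u, ?_, ?_⟩
    · rw [mem_compF]
      refine ⟨fun pc hpc => h1 pc ?_, by omega⟩
      rw [hsplit]
      exact List.mem_append.mpr (Or.inl hpc)
    · rw [hsplit]
      congr 2
      have : m.1 = 2 * (n - su) + 1 := by omega
      exact (Prod.mk.eta).symm.trans (by rw [← this])

theorem glue_inj {u v : List (ℕ × ℕ)} {x y : ℕ × ℕ}
    (h : u ++ x :: u.reverse = v ++ y :: v.reverse) : u = v ∧ x = y := by
  have hl : u.length = v.length := by
    have := congrArg List.length h
    simp at this; omega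
  obtain ⟨h1, h2⟩ := List.append_inj h hl
  exact ⟨h1, by injection h2⟩

theorem card_sInvF (n : ℕ) : (sInvF n).card = Aa n := by
  rw [sInvF, Aa, Finset.card_biUnion]
  · refine Finset.sum_congr rfl fun j hj => ?_
    rw [Finset.card_biUnion]
    · rw [Finset.sum_congr rfl fun c hc =>
        Finset.card_image_of_injective _ (fun a b hab => (glue_inj hab).1)]
      simp [Nat.card_Icc, mul_comm, Cc]
    · intro c hc c' hc' hne
      simp only [Finset.disjoint_left, Finset.mem_image]
      rintro l ⟨a, ha, rfl⟩ ⟨b, hb, hl⟩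
      obtain ⟨-, h2⟩ := glue_inj hl.symm
      injection h2 with h h'
      exact hne h'
  · intro j hj j' hj' hne
    simp only [Finset.disjoint_left, Finset.mem_biUnion, Finset.mem_image]
    rintro l ⟨c, hc, a, ha, rfl⟩ ⟨c', hc', b, hb, hl⟩
    obtain ⟨-, h2⟩ := glue_inj hl.symm
    injection h2 with h h'
    omega

theorem Ckey (ν : ℕ) : Cc (ν+2) = 2 * Cc (ν+1) + Ss ν := by
  rw [card_compF (ν+1), Finset.sum_range_succ']
  simp only [Nat.zero_add, one_mul, Nat.sub_zero]
  have : ∀ i ∈ Finset.range (ν+1), (i+1+1) * Cc (ν+1-(i+1)) =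
      (i+1) * Cc (ν - i) + Cc (ν - i) := by
    intro i hi
    have : ν + 1 - (i+1) = ν - i := by omega
    rw [this]; ring
  rw [Finset.sum_congr rfl this, Finset.sum_add_distrib, ← card_compF ν]
  have : ∑ i ∈ Finset.range (ν+1), Cc (ν - i) = Ss ν := by
    rw [Ss, ← Finset.sum_range_reflect]
    exact Finset.sum_congr rfl fun i hi => by
      have := Finset.mem_range.mp hi
      rw [show ν - (ν + 1 - 1 - i) = i from by omega]
  rw [this]; ring

theorem Arec (n : ℕ) : Aa (n+1) = Aa n + Cc (n+1) + 2 * Ss n := by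
  rw [Aa, Finset.sum_range_succ']
  simp only [Nat.mul_zero, Nat.zero_add, one_mul, Nat.sub_zero]
  have : ∀ i ∈ Finset.range (n+1), (2*(i+1)+1) * Cc (n+1-(i+1)) =
      (2*i+1) * Cc (n - i) + 2 * Cc (n - i) := by
    intro i hi
    have : n + 1 - (i+1) = n - i := by omega
    rw [this]; ring
  rw [Finset.sum_congr rfl this, Finset.sum_add_distrib, ← Finset.mul_sum]
  have : ∑ i ∈ Finset.range (n+1), Cc (n - i) = Ss n := by
    rw [Ss, ← Finset.sum_range_reflect]
    exact Finset.sum_congr rfl fun i hi => by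
      have := Finset.mem_range.mp hi
      rw [show n - (n + 1 - 1 - i) = i from by omega]
  rw [this, Aa]; ring

theorem L2 (n : ℕ) : Aa n + Ss n = 2 * Cc (n+1) := by
  induction n with
  | zero => simp [Aa, Ss, Cc, compF]
  | succ n ih =>
    show Aa (n+1) + Ss (n+1) = 2 * Cc (n+2)
    have h1 := Arec n
    have h2 := Ckey n
    have h3 : Ss (n+1) = Ss n + Cc (n+1) := Finset.sum_range_succ _ _
    omega

theorem main_rec (n : ℕ) : Aa (n+2) + Aa n = 3 * Aa (n+1) := by
  have h1 := Arec n
  have h2 : Aa (n+2) = Aa (n+1) + Cc (n+2) + 2 * Ss (n+1) := Arec (n+1)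
  have h3 := Ckey n
  have h4 : Ss (n+1) = Ss n + Cc (n+1) := Finset.sum_range_succ _ _
  have h5 := L2 n
  omega

theorem aA (a : ℕ → ℕ)
    (ha : ∀ n, a n = Nat.card {l : List (ℕ × ℕ) //
        IsNColourComposition (2 * n + 1) l ∧ l.reverse = l}) (n : ℕ) :
    a n = Aa n := by
  rw [ha n, ← card_sInvF n, ← Nat.card_eq_finsetCard]
  exact Nat.card_congr (Equiv.subtypeEquivRight fun l => (mem_sInvF n l).symm)

theorem selfinverse_odd_recurrence (a : ℕ → ℕ)
    (ha : ∀ n, a n = Nat.card {l : List (ℕ × ℕ) //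
        IsNColourComposition (2 * n + 1) l ∧ l.reverse = l}) :
    a 0 = 1 ∧ a 1 = 4 ∧ ∀ n, 2 ≤ n → a n + a (n - 2) = 3 * a (n - 1) := by
  refine ⟨?_, ?_, ?_⟩
  · rw [aA a ha 0]; simp [Aa, Cc, compF]
  · rw [aA a ha 1]; simp [Aa, Finset.sum_range_succ, Cc, compF]
  · intro n hn
    obtain ⟨m, rfl⟩ : ∃ m, n = m + 2 := ⟨n - 2, by omega⟩
    rw [aA a ha, aA a ha, aA a ha, show m + 2 - 2 = m from by omega,
      show m + 2 - 1 = m + 1 from by omega]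
    exact main_rec m
end

section
/- Let b_n denote the number of n-colour self-inverse compositions of 2n into an even number of parts. Then b_1 = 1, b_2 = 3, and b_n + b_{n−2} = 3·b_{n−1} for all n > 2. -/
abbrev NCComp (ν : ℕ) := {l : List (ℕ × ℕ) // IsNColourComposition ν l}

lemma half_decomp {l : List (ℕ × ℕ)} (hr : l.reverse = l) (he : Even l.length) :
    l = l.take (l.length / 2) ++ (l.take (l.length / 2)).reverse := by
  obtain ⟨k, hk⟩ := he
  have hlen : l.length = 2 * k := by omega
  have hk2 : l.length / 2 = k := by omega
  rw [hk2]
  have h1 : l.take k ++ l.drop k = l := List.take_append_drop k l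
  have h2 : (l.drop k).reverse ++ (l.take k).reverse = l := by
    rw [← List.reverse_append, h1, hr]
  have hlen2 : (l.drop k).reverse.length = (l.take k).length := by
    simp [hlen]; omega
  have h3 := (List.append_inj (h2.trans h1.symm) hlen2).1
  conv_lhs => rw [← h1]
  rw [← h3, List.reverse_reverse]

noncomputable def foldEquiv (n : ℕ) :
    {l : List (ℕ × ℕ) // IsNColourComposition (2 * n) l ∧ l.reverse = l ∧ Even l.length}
      ≃ NCComp n where
  toFun := fun ⟨l, hc, hr, he⟩ => ⟨l.take (l.length / 2), by
    constructor
    · intro pc hpc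
      exact hc.1 pc (List.mem_of_mem_take hpc)
    · have hd := half_decomp hr he
      have : (l.map Prod.fst).sum = 2 * n := hc.2
      rw [hd] at this
      simp only [List.map_append, List.sum_append, List.map_reverse, List.sum_reverse] at this
      have hd' : ((l.take (l.length / 2)).map Prod.fst).sum
          = ((l.take (l.length / 2)).map Prod.fst).sum := rfl
      omega⟩
  invFun := fun ⟨m, hm⟩ => ⟨m ++ m.reverse, by
    refine ⟨⟨?_, ?_⟩, ?_, ?_⟩
    · intro pc hpc
      rcases List.mem_append.1 hpc with h | h
      · exact hm.1 pc h
      · exact hm.1 pc (List.mem_reverse.1 h)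
    · simp only [List.map_append, List.sum_append, List.map_reverse, List.sum_reverse]
      rw [hm.2]; ring
    · rw [List.reverse_append, List.reverse_reverse]
    · simp only [List.length_append, List.length_reverse]
      exact ⟨m.length, rfl⟩⟩
  left_inv := by
    rintro ⟨l, hc, hr, he⟩
    apply Subtype.ext
    exact (half_decomp hr he).symm
  right_inv := by
    rintro ⟨m, hm⟩
    apply Subtype.ext
    simp only
    have hlen : (m ++ m.reverse).length = 2 * m.length := by simp; omega
    rw [hlen]
    have : 2 * m.length / 2 = m.length := by omega
    rw [this]
    exact List.take_left

def consMap (n : ℕ) : (Σ i : Fin (n+1), Fin (i.val+1) × NCComp (n - i.val)) → NCComp (n+1) :=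
  fun ⟨i, c, ⟨t, ht⟩⟩ => ⟨(i.val+1, c.val+1) :: t, by
    constructor
    · intro pc hpc
      rcases List.mem_cons.1 hpc with h | h
      · subst h; exact ⟨Nat.le_add_left 1 _, by have := c.isLt; omega⟩
      · exact ht.1 pc h
    · simp only [List.map_cons, List.sum_cons, ht.2]
      have := i.isLt
      omega⟩

lemma consMap_bijective (n : ℕ) : Function.Bijective (consMap n) := by
  constructor
  · rintro ⟨i, c, t, ht⟩ ⟨i', c', t', ht'⟩ h
    have h' : ((i.val+1, c.val+1) : ℕ × ℕ) :: t = (i'.val+1, c'.val+1) :: t' :=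
      congrArg Subtype.val h
    have h1 : i.val = i'.val := by
      have := (List.cons_eq_cons.1 h').1
      have := congrArg Prod.fst this; simpa using this
    have hi : i = i' := Fin.ext h1
    subst hi
    have h2 : c = c' := by
      apply Fin.ext
      have := (List.cons_eq_cons.1 h').1
      have := congrArg Prod.snd this; simpa using this
    subst h2
    have h3 : t = t' := (List.cons_eq_cons.1 h').2
    subst h3
    rfl
  · rintro ⟨l, hl⟩
    match l, hl with
    | [], hl => exact absurd hl.2 (by simp)
    | (p, c) :: t, hl =>
      have hc := hl.1 (p, c) List.mem_cons_self
      have hsum : p + (t.map Prod.fst).sum = n + 1 := by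
        simpa using hl.2
      have hp1 : 1 ≤ p := le_trans hc.1 hc.2
      have hpn : p ≤ n + 1 := by omega
      refine ⟨⟨⟨p - 1, by omega⟩, ⟨c - 1, by simp; omega⟩, ⟨t, ?_, ?_⟩⟩, ?_⟩
      · exact fun pc hpc => hl.1 pc (List.mem_cons_of_mem _ hpc)
      · simp only []; omega
      · apply Subtype.ext
        show ((p - 1 + 1, c - 1 + 1) : ℕ × ℕ) :: t = (p, c) :: t
        have : c ≥ 1 := hc.1
        congr 1
        simp only [Prod.mk.injEq]
        omega

noncomputable def consEquiv (n : ℕ) :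
    (Σ i : Fin (n+1), Fin (i.val+1) × NCComp (n - i.val)) ≃ NCComp (n+1) :=
  Equiv.ofBijective _ (consMap_bijective n)

instance compZeroUnique : Unique (NCComp 0) where
  default := ⟨[], by constructor <;> simp⟩
  uniq := by
    rintro ⟨l, hl⟩
    apply Subtype.ext
    match l, hl with
    | [], _ => rfl
    | (p, c) :: t, hl =>
      have hc := hl.1 (p, c) List.mem_cons_self
      have : p + (t.map Prod.fst).sum = 0 := by simpa using hl.2
      omega

lemma comp_finite : ∀ n, Finite (NCComp n) := by
  intro n
  induction n using Nat.strong_induction_on with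
  | _ n ih =>
    match n with
    | 0 => infer_instance
    | n + 1 =>
      have : ∀ i : Fin (n+1), Finite (NCComp (n - i.val)) := fun i => ih _ (by omega)
      exact Finite.of_equiv _ (consEquiv n)

instance (n : ℕ) : Finite (NCComp n) := comp_finite n

lemma comp_card_zero : Nat.card (NCComp 0) = 1 := Nat.card_unique

lemma comp_card_succ (n : ℕ) :
    Nat.card (NCComp (n+1)) = ∑ i ∈ Finset.range (n+1), (i+1) * Nat.card (NCComp (n - i)) := by
  rw [← Nat.card_congr (consEquiv n)]
  have : Nat.card (Σ i : Fin (n+1), Fin (i.val+1) × NCComp (n - i.val))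
      = ∑ i : Fin (n+1), Nat.card (Fin (i.val+1) × NCComp (n - i.val)) := by
    classical
    have := fun i : Fin (n+1) => Fintype.ofFinite (NCComp (n - i.val))
    simp only [Nat.card_eq_fintype_card]
    exact Fintype.card_sigma
  rw [this]
  rw [← Fin.sum_univ_eq_sum_range (fun i => (i+1) * Nat.card (NCComp (n - i))) (n+1)]
  congr 1
  funext i
  rw [Nat.card_prod, Nat.card_eq_fintype_card (α := Fin (i.val+1)), Fintype.card_fin]
lemma comp_card_one : Nat.card (NCComp 1) = 1 := by
  rw [comp_card_succ]
  simp [comp_card_zero]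

lemma comp_card_two : Nat.card (NCComp 2) = 3 := by
  rw [comp_card_succ]
  simp [Finset.sum_range_succ, comp_card_zero, comp_card_one]

lemma comp_card_key (n : ℕ) :
    Nat.card (NCComp (n+2)) = 2 * Nat.card (NCComp (n+1))
      + ∑ j ∈ Finset.range (n+1), Nat.card (NCComp j) := by
  rw [comp_card_succ (n+1), Finset.sum_range_succ' (fun i => (i+1) * Nat.card (NCComp (n+1-i)))]
  have h1 : ∀ i, (i+1+1) * Nat.card (NCComp (n+1-(i+1)))
      = (i+1) * Nat.card (NCComp (n-i)) + Nat.card (NCComp (n-i)) := by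
    intro i
    have : n + 1 - (i+1) = n - i := by omega
    rw [this]; ring
  rw [Finset.sum_congr rfl (fun i _ => h1 i), Finset.sum_add_distrib, ← comp_card_succ n]
  have h2 : ∑ i ∈ Finset.range (n+1), Nat.card (NCComp (n-i))
      = ∑ j ∈ Finset.range (n+1), Nat.card (NCComp j) := by
    have := Finset.sum_range_reflect (fun j => Nat.card (NCComp j)) (n+1)
    simpa using this
  rw [h2]
  simp only [Nat.sub_zero]
  ring

lemma comp_card_rec (m : ℕ) :
    Nat.card (NCComp (m+3)) + Nat.card (NCComp (m+1)) = 3 * Nat.card (NCComp (m+2)) := by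
  have h1 := comp_card_key (m+1)
  have h2 := comp_card_key m
  simp only [show m+1+2 = m+3 by omega, show m+1+1 = m+2 by omega] at h1
  rw [Finset.sum_range_succ] at h1
  omega

theorem selfinverse_even_evenparts_recurrence (b : ℕ → ℕ)
    (hb : ∀ n, b n = Nat.card {l : List (ℕ × ℕ) //
        IsNColourComposition (2 * n) l ∧ l.reverse = l ∧ Even l.length}) :
    b 1 = 1 ∧ b 2 = 3 ∧ ∀ n, 2 < n → b n + b (n - 2) = 3 * b (n - 1) := by
  have hbc : ∀ n, b n = Nat.card (NCComp n) := by
    intro n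
    rw [hb n]
    exact Nat.card_congr (foldEquiv n)
  refine ⟨by rw [hbc]; exact comp_card_one, by rw [hbc]; exact comp_card_two, ?_⟩
  intro n hn
  obtain ⟨m, rfl⟩ : ∃ m, n = m + 3 := ⟨n - 3, by omega⟩
  have : m + 3 - 2 = m + 1 := by omega
  rw [this]
  have : m + 3 - 1 = m + 2 := by omega
  rw [this, hbc, hbc, hbc]
  exact comp_card_rec m
end

section
/- Let c_n denote the number of n-colour self-inverse compositions of 2n into an odd number of parts. Then c_1 = 2, c_2 = 6, and c_n + c_{n−2} = 3·c_{n−1} for all n > 2. -/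
open Finset

theorem List.eq_take_append_getElem_cons_reverse_take {α : Type*} {l : List α} {k : ℕ}
    (hlen : l.length = 2 * k + 1) (hrev : l.reverse = l) :
    l = l.take k ++ l[k]'(by omega) :: (l.take k).reverse := by
  conv_lhs => rw [← List.take_append_drop k l, List.drop_eq_getElem_cons (by omega)]
  rw [List.reverse_take, hrev, show l.length - k = k + 1 by omega]

theorem List.sum_map_eq_two_mul_sum_map_take_add {α : Type*} {l : List α} {k : ℕ}
    (hlen : l.length = 2 * k + 1) (hrev : l.reverse = l) (f : α → ℕ) :
    (l.map f).sum = 2 * ((l.take k).map f).sum + f (l[k]'(by omega)) := by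
  conv_lhs => rw [List.eq_take_append_getElem_cons_reverse_take hlen hrev]
  simp only [List.map_append, List.map_cons, List.map_reverse, List.sum_append, List.sum_cons,
    List.sum_reverse]
  ring

section ConvolutionRecurrence

variable {a : ℕ → ℕ}

theorem succ_succ_eq_add_sum_of_eq_sum_sub_mul
    (ha : ∀ s, a (s + 1) = ∑ q ∈ range (s + 1), (s + 1 - q) * a q) (s : ℕ) :
    a (s + 2) = a (s + 1) + ∑ q ∈ range (s + 2), a q := by
  have h : a (s + 2) = ∑ q ∈ range (s + 2), ((s + 1 - q) * a q + a q) := by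
    rw [ha (s + 1)]
    refine sum_congr rfl fun q hq => ?_
    rw [mem_range] at hq
    rw [show s + 1 + 1 - q = s + 1 - q + 1 by omega]
    ring
  rw [h, sum_add_distrib, sum_range_succ, Nat.sub_self, zero_mul, add_zero, ← ha]

theorem add_eq_three_mul_of_eq_sum_sub_mul
    (ha : ∀ s, a (s + 1) = ∑ q ∈ range (s + 1), (s + 1 - q) * a q) (s : ℕ) :
    a (s + 3) + a (s + 1) = 3 * a (s + 2) := by
  have h₁ := succ_succ_eq_add_sum_of_eq_sum_sub_mul ha s
  have h₂ := succ_succ_eq_add_sum_of_eq_sum_sub_mul ha (s + 1)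
  rw [sum_range_succ, show s + 1 + 2 = s + 3 from rfl, show s + 1 + 1 = s + 2 from rfl] at h₂
  omega

end ConvolutionRecurrence

theorem isNColourComposition_zero_iff {l : List (ℕ × ℕ)} :
    IsNColourComposition 0 l ↔ l = [] := by
  constructor
  · rintro ⟨hcol, hsum⟩
    cases l with
    | nil => rfl
    | cons pc t =>
      have := hcol pc List.mem_cons_self
      simp only [List.map_cons, List.sum_cons] at hsum
      omega
  · rintro rfl
    exact ⟨by simp, rfl⟩

abbrev NColourComposition (ν : ℕ) : Type := {l : List (ℕ × ℕ) // IsNColourComposition ν l}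

namespace NColourComposition

instance : Unique (NColourComposition 0) where
  default := ⟨[], isNColourComposition_zero_iff.2 rfl⟩
  uniq l := Subtype.ext (isNColourComposition_zero_iff.1 l.2)

/-- A composition of `s + 1` starts with a part `p + 1 ≤ s + 1` of colour `c + 1 ≤ p + 1`. -/
def consEquiv (s : ℕ) :
    NColourComposition (s + 1) ≃
      Σ p : Fin (s + 1), Fin (p + 1) × NColourComposition (s - p) where
  toFun
    | ⟨[], hl⟩ => absurd hl.2 (by simp)
    | ⟨(p, c) :: t, hl⟩ =>
      have hpc := hl.1 (p, c) List.mem_cons_self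
      have hsum : p + (t.map Prod.fst).sum = s + 1 := by simpa using hl.2
      ⟨⟨p - 1, by omega⟩, ⟨c - 1, by dsimp only; omega⟩,
        ⟨t, fun pc h => hl.1 pc (List.mem_cons_of_mem _ h), by dsimp only; omega⟩⟩
  invFun
    | ⟨⟨p, hp⟩, ⟨c, hc⟩, ⟨t, ht⟩⟩ =>
      ⟨(p + 1, c + 1) :: t, fun pc h => by
        rcases List.mem_cons.1 h with rfl | h
        · dsimp only at hc ⊢; omega
        · exact ht.1 pc h,
       by simp only [List.map_cons, List.sum_cons, ht.2]; omega⟩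
  left_inv
    | ⟨[], hl⟩ => absurd hl.2 (by simp)
    | ⟨(p, c) :: t, hl⟩ => by
      have := hl.1 (p, c) List.mem_cons_self
      apply Subtype.ext
      dsimp only at this ⊢
      congr 2 <;> omega
  right_inv _ := rfl

instance finite (s : ℕ) : Finite (NColourComposition s) := by
  induction s using Nat.strong_induction_on with
  | _ s ih =>
    cases s with
    | zero => infer_instance
    | succ s =>
      have : ∀ p : Fin (s + 1), Finite (NColourComposition (s - p)) := fun p => ih _ (by omega)
      exact Finite.of_equiv _ (consEquiv s).symm

theorem card_succ (s : ℕ) : Nat.card (NColourComposition (s + 1)) =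
    ∑ q ∈ range (s + 1), (s + 1 - q) * Nat.card (NColourComposition q) := by
  rw [Nat.card_congr (consEquiv s), Nat.card_sigma,
    ← sum_range_reflect, ← Fin.sum_univ_eq_sum_range]
  refine Fintype.sum_congr _ _ fun p => ?_
  rw [Nat.card_prod, Nat.card_eq_fintype_card, Fintype.card_fin]
  congr 2
  omega

end NColourComposition

abbrev SelfInverseOddComposition (ν : ℕ) : Type :=
  {l : List (ℕ × ℕ) // IsNColourComposition ν l ∧ l.reverse = l ∧ Odd l.length}

/-- The first half `h` of a self-inverse composition of `2 * n` of odd length, together with the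
colour minus one of its middle part, which is `2 * (n - Σ h)`. -/
def HalfAndMiddle (n : ℕ) : Type :=
  {x : List (ℕ × ℕ) × ℕ // (∀ pc ∈ x.1, 1 ≤ pc.2 ∧ pc.2 ≤ pc.1) ∧
    (x.1.map Prod.fst).sum < n ∧ x.2 < 2 * (n - (x.1.map Prod.fst).sum)}

namespace SelfInverseOddComposition

variable {n : ℕ}

theorem length_eq_two_mul_add_one {ν : ℕ} (l : SelfInverseOddComposition ν) :
    l.1.length = 2 * (l.1.length / 2) + 1 :=
  (Nat.two_mul_div_two_add_one_of_odd l.2.2.2).symm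

theorem length_div_two_lt {ν : ℕ} (l : SelfInverseOddComposition ν) :
    l.1.length / 2 < l.1.length := by
  have := length_eq_two_mul_add_one l
  omega

theorem two_mul_sum_take_add_middle (l : SelfInverseOddComposition (2 * n)) :
    2 * ((l.1.take (l.1.length / 2)).map Prod.fst).sum +
      (l.1[l.1.length / 2]'(length_div_two_lt l)).1 = 2 * n :=
  (List.sum_map_eq_two_mul_sum_map_take_add (length_eq_two_mul_add_one l) l.2.2.1
    Prod.fst).symm.trans l.2.1.2

def toHalfAndMiddle (l : SelfInverseOddComposition (2 * n)) : HalfAndMiddle n :=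
  have hmid := l.2.1.1 _ (List.getElem_mem (length_div_two_lt l))
  have hsum := two_mul_sum_take_add_middle l
  ⟨(l.1.take (l.1.length / 2), (l.1[l.1.length / 2]'(length_div_two_lt l)).2 - 1),
    fun pc h => l.2.1.1 pc (List.take_subset _ _ h), by dsimp only; omega, by dsimp only; omega⟩

def ofHalfAndMiddle (x : HalfAndMiddle n) : SelfInverseOddComposition (2 * n) :=
  ⟨x.1.1 ++ (2 * (n - (x.1.1.map Prod.fst).sum), x.1.2 + 1) :: x.1.1.reverse, by
    obtain ⟨⟨h, c⟩, hcol, hsum, hc⟩ := x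
    dsimp only at hcol hsum hc ⊢
    refine ⟨⟨fun pc hm => ?_, ?_⟩, by simp, ⟨h.length, by simp; ring⟩⟩
    · simp only [List.mem_append, List.mem_cons, List.mem_reverse] at hm
      rcases hm with hm | rfl | hm
      · exact hcol pc hm
      · dsimp only; omega
      · exact hcol pc hm
    · simp only [List.map_append, List.map_cons, List.map_reverse, List.sum_append,
        List.sum_cons, List.sum_reverse]
      omega⟩

def equivHalfAndMiddle : SelfInverseOddComposition (2 * n) ≃ HalfAndMiddle n where
  toFun := toHalfAndMiddle
  invFun := ofHalfAndMiddle
  left_inv l := by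
    have hmid := l.2.1.1 _ (List.getElem_mem (length_div_two_lt l))
    have hsum := two_mul_sum_take_add_middle l
    apply Subtype.ext
    conv_rhs =>
      rw [List.eq_take_append_getElem_cons_reverse_take (length_eq_two_mul_add_one l) l.2.2.1]
    simp only [ofHalfAndMiddle, toHalfAndMiddle]
    congr 2
    exact Prod.ext (by dsimp only; omega) (by dsimp only; omega)
  right_inv := by
    rintro ⟨⟨h, c⟩, _⟩
    have hk :
        (h ++ (2 * (n - (h.map Prod.fst).sum), c + 1) :: h.reverse).length / 2 = h.length := by
      simp only [List.length_append, List.length_cons, List.length_reverse]; omega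
    apply Subtype.ext
    simp only [ofHalfAndMiddle, toHalfAndMiddle, hk, List.take_left' rfl,
      List.getElem_append_right (le_refl h.length)]
    simp

end SelfInverseOddComposition

def HalfAndMiddle.equivSigma (n : ℕ) :
    HalfAndMiddle n ≃ Σ s : Fin n, NColourComposition s × Fin (2 * (n - s)) where
  toFun x :=
    ⟨⟨(x.1.1.map Prod.fst).sum, x.2.2.1⟩, ⟨x.1.1, x.2.1, rfl⟩, ⟨x.1.2, x.2.2.2⟩⟩
  invFun y := ⟨(y.2.1.1, y.2.2.1), y.2.1.2.1, by rw [y.2.1.2.2]; exact y.1.2,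
    by rw [y.2.1.2.2]; exact y.2.2.2⟩
  left_inv _ := rfl
  right_inv := by
    rintro ⟨⟨s, hs⟩, ⟨h, hh⟩, c⟩
    obtain rfl : (h.map Prod.fst).sum = s := hh.2
    rfl

theorem card_selfInverseOddComposition (n : ℕ) :
    Nat.card (SelfInverseOddComposition (2 * n)) =
      ∑ s ∈ range n, 2 * (n - s) * Nat.card (NColourComposition s) := by
  rw [Nat.card_congr (SelfInverseOddComposition.equivHalfAndMiddle.trans
    (HalfAndMiddle.equivSigma n)), Nat.card_sigma, ← Fin.sum_univ_eq_sum_range]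
  refine Fintype.sum_congr _ _ fun s => ?_
  rw [Nat.card_prod, Nat.card_eq_fintype_card (α := Fin _), Fintype.card_fin, mul_comm]

theorem card_selfInverseOddComposition_of_pos {n : ℕ} (hn : 0 < n) :
    Nat.card (SelfInverseOddComposition (2 * n)) = 2 * Nat.card (NColourComposition n) := by
  obtain ⟨m, rfl⟩ := Nat.exists_eq_add_one_of_ne_zero hn.ne'
  simp only [card_selfInverseOddComposition, NColourComposition.card_succ, mul_sum, mul_assoc]

theorem selfinverse_even_oddparts_recurrence (c : ℕ → ℕ)
    (hc : ∀ n, c n = Nat.card {l : List (ℕ × ℕ) //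
        IsNColourComposition (2 * n) l ∧ l.reverse = l ∧ Odd l.length}) :
    c 1 = 2 ∧ c 2 = 6 ∧ ∀ n, 2 < n → c n + c (n - 2) = 3 * c (n - 1) := by
  have hc_eq {n : ℕ} (hn : 0 < n) : c n = 2 * Nat.card (NColourComposition n) :=
    (hc n).trans (card_selfInverseOddComposition_of_pos hn)
  have ha₁ : Nat.card (NColourComposition 1) = 1 := by
    simp [NColourComposition.card_succ 0]
  have ha₂ : Nat.card (NColourComposition 2) = 3 := by
    simp [NColourComposition.card_succ 1, sum_range_succ, ha₁]
  refine ⟨by rw [hc_eq one_pos, ha₁], by rw [hc_eq two_pos, ha₂], fun n hn => ?_⟩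
  obtain ⟨s, rfl⟩ : ∃ s, n = s + 3 := ⟨n - 3, by omega⟩
  rw [show s + 3 - 2 = s + 1 by omega, show s + 3 - 1 = s + 2 by omega,
    hc_eq (by omega), hc_eq (by omega), hc_eq (by omega)]
  have := add_eq_three_mul_of_eq_sum_sub_mul
    (a := fun s => Nat.card (NColourComposition s)) NColourComposition.card_succ s
  omega
end

section
/- Let d_n denote the number of n-colour self-inverse compositions of 2n. Then d_1 = 3, d_2 = 9, and d_n + d_{n−2} = 3·d_{n−1} for all n > 2. -/
namespace SelfInvAux

open Finset

def comps : ℕ → Finset (List (ℕ × ℕ))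
  | 0 => {[]}
  | (n+1) => Finset.univ.biUnion fun p : Fin (n+1) =>
      Finset.univ.biUnion fun c : Fin (p.1+1) =>
        (comps (n - p.1)).image (List.cons (p.1+1, c.1+1))
  decreasing_by omega

def cC (n : ℕ) : ℕ := if n = 0 then 1 else Nat.fib (2 * n)

lemma fib_step (m : ℕ) : Nat.fib (m+2) = Nat.fib m + Nat.fib (m+1) := Nat.fib_add_two

lemma sumC (n : ℕ) : ∑ j ∈ Finset.range (n+1), cC j = Nat.fib (2*n+1) := by
  induction n with
  | zero => simp [cC]
  | succ n ih =>
    rw [Finset.sum_range_succ, ih]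
    have h1 : cC (n+1) = Nat.fib (2*n+2) := by simp [cC]; ring_nf
    have h2 : Nat.fib (2*(n+1)+1) = Nat.fib (2*n+3) := by ring_nf
    have h3 := fib_step (2*n+1)
    have h4 : 2*n+1+2 = 2*n+3 := by ring
    have h5 : 2*n+1+1 = 2*n+2 := by ring
    rw [h4, h5] at h3
    rw [h1, h2, h3]

lemma mainSum (n : ℕ) : ∑ p ∈ Finset.range n, (p+1) * cC (n-1-p) = Nat.fib (2*n) := by
  induction n with
  | zero => simp
  | succ n ih =>
    rw [Finset.sum_range_succ']
    have e1 : ∀ p ∈ Finset.range n, (p+1+1) * cC (n+1-1-(p+1)) = (p+1) * cC (n-1-p) + cC (n-1-p) := by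
      intro p hp
      have : n+1-1-(p+1) = n-1-p := by omega
      rw [this]; ring
    rw [Finset.sum_congr rfl e1, Finset.sum_add_distrib, ih]
    have e2 : ∑ p ∈ Finset.range n, cC (n-1-p) = ∑ j ∈ Finset.range n, cC j :=
      Finset.sum_range_reflect cC n
    rw [e2]
    have e3 : (0+1) * cC (n+1-1-0) = cC n := by simp
    rw [e3]
    have e4 : ∑ j ∈ Finset.range n, cC j + cC n = Nat.fib (2*n+1) := by
      rw [← Finset.sum_range_succ, sumC]
    have h3 := fib_step (2*n)
    have h2 : Nat.fib (2*(n+1)) = Nat.fib (2*n+2) := by ring_nf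
    rw [h2, h3]
    omega

lemma mem_comps : ∀ n l, l ∈ comps n ↔ IsNColourComposition n l := by
  intro n
  induction n using Nat.strong_induction_on with
  | _ n ih =>
    intro l
    match n with
    | 0 =>
      simp only [comps, Finset.mem_singleton, IsNColourComposition]
      constructor
      · rintro rfl; simp
      · rintro ⟨h1, h2⟩
        cases l with
        | nil => rfl
        | cons x t =>
          exfalso
          have := h1 x (by simp)
          simp at h2; omega
    | n+1 =>
      simp only [comps, Finset.mem_biUnion, Finset.mem_univ, Finset.mem_image, true_and]
      constructor
      · rintro ⟨p, c, t, ht, rfl⟩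
        have ht' := (ih (n - p.1) (by omega) t).1 ht
        obtain ⟨h1, h2⟩ := ht'
        refine ⟨?_, ?_⟩
        · rintro pc hpc
          rcases List.mem_cons.1 hpc with rfl | h
          · simp; omega
          · exact h1 pc h
        · simp [h2]; have := p.2; omega
      · rintro ⟨h1, h2⟩
        cases l with
        | nil => simp at h2
        | cons x t =>
          obtain ⟨p, c⟩ := x
          have hx := h1 (p, c) (by simp)
          simp only at hx
          simp only [List.map_cons, List.sum_cons] at h2
          have hp1 : 1 ≤ p := by omega
          have hpn : p ≤ n + 1 := by omega
          refine ⟨⟨p - 1, by omega⟩, ⟨c - 1, by simp; omega⟩, t, ?_, ?_⟩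
          · refine (ih (n - (p-1)) (by omega) t).2 ⟨fun pc hpc => h1 pc (by simp [hpc]), ?_⟩
            omega
          · simp; constructor <;> omega

lemma card_comps : ∀ n, (comps n).card = cC n := by
  intro n
  induction n using Nat.strong_induction_on with
  | _ n ih =>
    match n with
    | 0 => simp [comps, cC]
    | n+1 =>
      rw [comps]
      rw [Finset.card_biUnion]
      · have inner : ∀ p : Fin (n+1),
            (Finset.univ.biUnion fun c : Fin (p.1+1) =>
              (comps (n - p.1)).image (List.cons (p.1+1, c.1+1))).card
            = (p.1+1) * cC (n - p.1) := by
          intro p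
          rw [Finset.card_biUnion]
          · have h : ∀ c : Fin (p.1+1),
                ((comps (n - p.1)).image (List.cons (p.1+1, c.1+1))).card = cC (n - p.1) := by
              intro c
              rw [Finset.card_image_of_injective _ (List.cons_injective), ih _ (by omega)]
            simp [h, Finset.sum_const, mul_comm]
          · intro c1 _ c2 _ hne
            simp only [Finset.disjoint_left, Finset.mem_image]
            rintro l ⟨t1, _, rfl⟩ ⟨t2, _, heq⟩
            apply hne
            simp only [List.cons.injEq, Prod.mk.injEq] at heq
            apply Fin.ext; omega
        calc (∑ p : Fin (n+1), (Finset.univ.biUnion fun c : Fin (p.1+1) =>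
              (comps (n - p.1)).image (List.cons (p.1+1, c.1+1))).card)
            = ∑ p : Fin (n+1), (p.1+1) * cC (n - p.1) :=
              Finset.sum_congr rfl fun p _ => inner p
          _ = ∑ p ∈ Finset.range (n+1), (p+1) * cC (n - p) :=
              Fin.sum_univ_eq_sum_range (fun p => (p+1) * cC (n-p)) (n+1)
          _ = ∑ p ∈ Finset.range (n+1), (p+1) * cC (n+1-1-p) := rfl
          _ = cC (n+1) := by rw [mainSum]; simp [cC]
      · intro p1 _ p2 _ hne
        simp only [Finset.disjoint_left, Finset.mem_biUnion, Finset.mem_image]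
        rintro l ⟨c1, _, t1, _, rfl⟩ ⟨c2, _, t2, _, heq⟩
        apply hne
        simp only [List.cons.injEq, Prod.mk.injEq] at heq
        apply Fin.ext; omega

def pals (n : ℕ) : Finset (List (ℕ × ℕ)) :=
  ((comps n).image fun h => h ++ h.reverse) ∪
  (Finset.univ.biUnion fun m : Fin n =>
    Finset.univ.biUnion fun c : Fin (2*(m.1+1)) =>
      (comps (n - 1 - m.1)).image fun h => h ++ (2*(m.1+1), c.1+1) :: h.reverse)

lemma pal_take {l : List (ℕ × ℕ)} (hp : l.reverse = l) (n : ℕ) :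
    l.take n = (l.drop (l.length - n)).reverse := by
  conv_lhs => rw [← hp]
  rw [List.take_reverse]

lemma sum_reverse (h : List (ℕ × ℕ)) :
    (h.reverse.map Prod.fst).sum = (h.map Prod.fst).sum := by
  rw [List.map_reverse, List.sum_reverse]

lemma mem_pals (n : ℕ) (l : List (ℕ × ℕ)) :
    l ∈ pals n ↔ IsNColourComposition (2*n) l ∧ l.reverse = l := by
  unfold pals
  simp only [Finset.mem_union, Finset.mem_biUnion, Finset.mem_image, Finset.mem_univ, true_and]
  constructor
  · rintro (⟨h, hh, rfl⟩ | ⟨m, c, h, hh, rfl⟩)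
    · obtain ⟨h1, h2⟩ := (mem_comps n h).1 hh
      refine ⟨⟨?_, ?_⟩, by simp⟩
      · intro pc hpc
        rcases List.mem_append.1 hpc with hm | hm
        · exact h1 pc hm
        · exact h1 pc (List.mem_reverse.1 hm)
      · simp only [List.map_append, List.sum_append, sum_reverse, h2]; ring
    · obtain ⟨h1, h2⟩ := (mem_comps _ h).1 hh
      have hmn : m.1 < n := m.2
      refine ⟨⟨?_, ?_⟩, by simp⟩
      · intro pc hpc
        rcases List.mem_append.1 hpc with hm | hm
        · exact h1 pc hm
        · rcases List.mem_cons.1 hm with rfl | hm'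
          · have := c.2; simp
          · exact h1 pc (List.mem_reverse.1 hm')
      · simp only [List.map_append, List.sum_append, List.map_cons, List.sum_cons, sum_reverse, h2]
        omega
  · rintro ⟨⟨h1, h2⟩, hp⟩
    rcases Nat.even_or_odd l.length with ⟨a, ha⟩ | ⟨a, ha⟩
    · left
      refine ⟨l.take a, ?_, ?_⟩
      · apply (mem_comps n _).2
        have hd : l.drop a = (l.take a).reverse := by
          have := pal_take hp a
          rw [show l.length - a = a by omega] at this
          rw [this]; simp [List.reverse_reverse]
        refine ⟨fun pc hpc => h1 pc (List.take_subset a l hpc), ?_⟩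
        have hsum : (l.map Prod.fst).sum =
            ((l.take a).map Prod.fst).sum + ((l.drop a).map Prod.fst).sum := by
          rw [← List.sum_append, ← List.map_append, List.take_append_drop]
        rw [hd, sum_reverse] at hsum
        omega
      · have hd : l.drop a = (l.take a).reverse := by
          have := pal_take hp a
          rw [show l.length - a = a by omega] at this
          rw [this]; simp [List.reverse_reverse]
        rw [← hd, List.take_append_drop]
    · right
      have hal : a < l.length := by omega
      set x := l[a]'hal with hx
      have hd : l.drop (a+1) = (l.take a).reverse := by
        have := pal_take hp a
        rw [show l.length - a = a + 1 by omega] at this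
        rw [this]; simp [List.reverse_reverse]
      have hdecomp : l = l.take a ++ x :: (l.take a).reverse := by
        rw [← hd, ← List.drop_eq_getElem_cons hal, List.take_append_drop]
      have hsum : (l.map Prod.fst).sum =
          ((l.take a).map Prod.fst).sum + (x.1 + ((l.take a).reverse.map Prod.fst).sum) := by
        conv_lhs => rw [hdecomp]
        simp [List.map_append, List.sum_append]
      rw [sum_reverse] at hsum
      have hxl : x ∈ l := List.getElem_mem hal
      have hx12 := h1 x hxl
      have hxeven : x.1 = 2*n - 2*((l.take a).map Prod.fst).sum := by omega
      have hx2 : 2 ≤ x.1 := by omega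
      set m : ℕ := x.1 / 2 - 1 with hm
      have hx2m : x.1 = 2*(m+1) := by omega
      have hmn : m < n := by omega
      refine ⟨⟨m, hmn⟩, ⟨x.2 - 1, by simp; omega⟩, l.take a, ?_, ?_⟩
      · apply (mem_comps _ _).2
        refine ⟨fun pc hpc => h1 pc (List.take_subset a l hpc), by simp only [Fin.val_mk]; omega⟩
      · simp only
        rw [show (2*(m+1), x.2 - 1 + 1) = x by rw [← hx2m]; obtain ⟨x1,x2⟩ := x; simp at *; omega]
        exact hdecomp.symm

lemma center_eq {x y : ℕ × ℕ} {h t : List (ℕ × ℕ)}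
    (e : h ++ x :: h.reverse = t ++ y :: t.reverse) : h = t ∧ x = y := by
  have hl : h.length = t.length := by
    have := congrArg List.length e
    simp at this; omega
  have h1 : h = t := by
    have := congrArg (List.take h.length) e
    rwa [List.take_left, hl, List.take_left] at this
  subst h1
  have := congrArg (List.drop h.length) e
  rw [List.drop_left, List.drop_left] at this
  exact ⟨rfl, (List.cons_eq_cons.1 this).1⟩

lemma even_encoder_injOn (n : ℕ) :
    Set.InjOn (fun h : List (ℕ × ℕ) => h ++ h.reverse) (comps n) := by
  intro a _ b _ e
  simp only at e
  have hl : a.length = b.length := by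
    have := congrArg List.length e; simp at this; omega
  have := congrArg (List.take a.length) e
  rwa [List.take_left, hl, List.take_left] at this

lemma card_pals (n : ℕ) (hn : 1 ≤ n) : (pals n).card = 3 * Nat.fib (2*n) := by
  unfold pals
  rw [Finset.card_union_of_disjoint]
  · rw [Finset.card_image_of_injOn (even_encoder_injOn n), card_comps]
    have hbu : (Finset.univ.biUnion fun m : Fin n =>
        Finset.univ.biUnion fun c : Fin (2*(m.1+1)) =>
          (comps (n - 1 - m.1)).image fun h => h ++ (2*(m.1+1), c.1+1) :: h.reverse).card
        = 2 * Nat.fib (2*n) := by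
      rw [Finset.card_biUnion]
      · have inner : ∀ m : Fin n,
            (Finset.univ.biUnion fun c : Fin (2*(m.1+1)) =>
              (comps (n - 1 - m.1)).image fun h => h ++ (2*(m.1+1), c.1+1) :: h.reverse).card
            = 2*(m.1+1) * cC (n - 1 - m.1) := by
          intro m
          rw [Finset.card_biUnion]
          · have hc : ∀ c : Fin (2*(m.1+1)),
                ((comps (n - 1 - m.1)).image fun h => h ++ (2*(m.1+1), c.1+1) :: h.reverse).card
                = cC (n - 1 - m.1) := by
              intro c
              rw [Finset.card_image_of_injOn, card_comps]
              intro a _ b _ e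
              exact (center_eq e).1
            rw [Finset.sum_congr rfl fun c _ => hc c]; simp [mul_comm]
          · intro c1 _ c2 _ hne
            simp only [Finset.disjoint_left, Finset.mem_image]
            rintro l ⟨t1, _, rfl⟩ ⟨t2, _, heq⟩
            apply hne
            have := (center_eq heq.symm).2
            simp only [Prod.mk.injEq] at this
            apply Fin.ext; omega
        calc (∑ m : Fin n, (Finset.univ.biUnion fun c : Fin (2*(m.1+1)) =>
              (comps (n - 1 - m.1)).image fun h => h ++ (2*(m.1+1), c.1+1) :: h.reverse).card)
            = ∑ m : Fin n, 2*((m.1+1) * cC (n - 1 - m.1)) := by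
              refine Finset.sum_congr rfl fun m _ => ?_
              rw [inner m]; ring
          _ = 2 * ∑ m : Fin n, (m.1+1) * cC (n - 1 - m.1) := by rw [Finset.mul_sum]
          _ = 2 * ∑ m ∈ Finset.range n, (m+1) * cC (n - 1 - m) := by
              rw [Fin.sum_univ_eq_sum_range (fun m => (m+1) * cC (n-1-m)) n]
          _ = 2 * Nat.fib (2*n) := by rw [mainSum]
      · intro m1 _ m2 _ hne
        simp only [Finset.disjoint_left, Finset.mem_biUnion, Finset.mem_image, Finset.mem_univ,
          true_and]
        rintro l ⟨c1, t1, _, rfl⟩ ⟨c2, t2, _, heq⟩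
        apply hne
        have := (center_eq heq.symm).2
        simp only [Prod.mk.injEq] at this
        apply Fin.ext; omega
    rw [hbu]
    have : cC n = Nat.fib (2*n) := by simp [cC]; omega
    omega
  · simp only [Finset.disjoint_left, Finset.mem_image, Finset.mem_biUnion, Finset.mem_univ,
      true_and]
    rintro l ⟨h, _, rfl⟩ ⟨m, c, t, _, heq⟩
    have := congrArg List.length heq
    simp at this; omega

end SelfInvAux

theorem selfinverse_even_recurrence (d : ℕ → ℕ)
    (hd : ∀ n, d n = Nat.card {l : List (ℕ × ℕ) //
        IsNColourComposition (2 * n) l ∧ l.reverse = l}) :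
    d 1 = 3 ∧ d 2 = 9 ∧ ∀ n, 2 < n → d n + d (n - 2) = 3 * d (n - 1) := by
  open SelfInvAux in
  have key : ∀ n, 1 ≤ n → d n = 3 * Nat.fib (2*n) := by
    intro n hn
    rw [hd n]
    have : Nat.card {l : List (ℕ × ℕ) // IsNColourComposition (2 * n) l ∧ l.reverse = l}
        = (pals n).card := by
      rw [← Nat.card_eq_finsetCard]
      exact Nat.card_congr (Equiv.subtypeEquivRight fun l => (mem_pals n l).symm)
    rw [this, card_pals n hn]
  refine ⟨?_, ?_, ?_⟩
  · rw [key 1 (by norm_num)]; decide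
  · rw [key 2 (by norm_num)]; decide
  · intro n hn
    obtain ⟨k, rfl⟩ : ∃ k, n = k + 3 := ⟨n - 3, by omega⟩
    rw [show k+3-2 = k+1 by omega, show k+3-1 = k+2 by omega,
      key (k+3) (by omega), key (k+1) (by omega), key (k+2) (by omega)]
    have h6 : Nat.fib (2*(k+3)) = Nat.fib (2*k+6) := by ring_nf
    have h4 : Nat.fib (2*(k+2)) = Nat.fib (2*k+4) := by ring_nf
    have h2 : Nat.fib (2*(k+1)) = Nat.fib (2*k+2) := by ring_nf
    have a1 := SelfInvAux.fib_step (2*k+4)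
    have a2 := SelfInvAux.fib_step (2*k+3)
    have a3 := SelfInvAux.fib_step (2*k+2)
    rw [show 2*k+4+2 = 2*k+6 by ring, show 2*k+4+1 = 2*k+5 by ring] at a1
    rw [show 2*k+3+2 = 2*k+5 by ring, show 2*k+3+1 = 2*k+4 by ring] at a2
    rw [show 2*k+2+2 = 2*k+4 by ring, show 2*k+2+1 = 2*k+3 by ring] at a3
    rw [h6, h4, h2]
    omega
end

section
/- Let b_n denote the number of n-colour self-inverse compositions of 2n into an even number of parts (with b_0 = 0). Then, as formal power series over ℤ, (1 − 3X + X²) · Σ_{n≥0} b_n Xⁿ = X. -/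
namespace NCAux

abbrev P : ℕ → List (ℕ × ℕ) → Prop := IsNColourComposition

lemma P_ne_nil {n : ℕ} {l : List (ℕ × ℕ)} (hn : n ≠ 0) (h : P n l) : l ≠ [] := by
  rintro rfl
  exact hn (by simpa using h.2.symm)

lemma P_cons {n p c : ℕ} {t : List (ℕ × ℕ)} (h : P n ((p, c) :: t)) :
    1 ≤ c ∧ c ≤ p ∧ P ((t.map Prod.fst).sum) t ∧ n = p + (t.map Prod.fst).sum := by
  obtain ⟨h1, h2⟩ := h
  have hc := h1 (p, c) (by simp)
  refine ⟨hc.1, hc.2, ⟨fun pc hm => h1 pc (by simp [hm]), rfl⟩, ?_⟩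
  simpa using h2.symm

lemma P_cons' {m p c : ℕ} {t : List (ℕ × ℕ)} (hc1 : 1 ≤ c) (hc2 : c ≤ p)
    (ht : P m t) : P (p + m) ((p, c) :: t) := by
  refine ⟨?_, by simpa using ht.2⟩
  intro pc hm
  rcases List.mem_cons.1 hm with h | h
  · subst h; exact ⟨hc1, hc2⟩
  · exact ht.1 pc h

lemma eq_nil_of_P_zero {l : List (ℕ × ℕ)} (h : P 0 l) : l = [] := by
  cases l with
  | nil => rfl
  | cons a t =>
    obtain ⟨a1, a2⟩ := a
    have := P_cons h
    omega

lemma bounds {n : ℕ} {l : List (ℕ × ℕ)} (h : P n l) : ∀ pc ∈ l, pc.1 ≤ n ∧ pc.2 ≤ n := by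
  intro pc hm
  have hc := h.1 pc hm
  have hp : pc.1 ≤ (l.map Prod.fst).sum :=
    List.single_le_sum (fun x _ => Nat.zero_le x) _ (List.mem_map_of_mem hm)
  rw [h.2] at hp
  omega

lemma len_le {n : ℕ} {l : List (ℕ × ℕ)} (h : P n l) : l.length ≤ n := by
  have h1 : ∀ i ∈ l.map Prod.fst, 1 ≤ i := by
    intro i hi
    obtain ⟨pc, hm, rfl⟩ := List.mem_map.1 hi
    exact le_trans (h.1 pc hm).1 (h.1 pc hm).2
  have := List.length_le_sum_of_one_le (l.map Prod.fst) h1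
  rw [h.2] at this
  simpa using this

def enc (n : ℕ) (l : List (ℕ × ℕ)) : List (Fin (n + 1) × Fin (n + 1)) :=
  l.map fun pc => (⟨pc.1 % (n + 1), Nat.mod_lt _ n.succ_pos⟩,
    ⟨pc.2 % (n + 1), Nat.mod_lt _ n.succ_pos⟩)

lemma enc_dec {n : ℕ} {l : List (ℕ × ℕ)} (hl : ∀ pc ∈ l, pc.1 ≤ n ∧ pc.2 ≤ n) :
    (enc n l).map (fun q => ((q.1 : ℕ), (q.2 : ℕ))) = l := by
  induction l with
  | nil => rfl
  | cons a t ih =>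
    have ha := hl a (by simp)
    obtain ⟨a1, a2⟩ := a
    simp only [enc, List.map_cons, List.map_map] at ih ⊢
    refine congrArg₂ _ ?_ (ih fun pc hm => hl pc (by simp [hm]))
    simp only [Prod.mk.injEq]
    exact ⟨Nat.mod_eq_of_lt (by simp at ha; omega), Nat.mod_eq_of_lt (by simp at ha; omega)⟩

instance finP (n : ℕ) : Finite {l : List (ℕ × ℕ) // P n l} := by
  haveI := (List.finite_length_le (Fin (n + 1) × Fin (n + 1)) n).to_subtype
  refine Finite.of_injective (fun x : {l : List (ℕ × ℕ) // P n l} =>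
    (⟨enc n x.1, ?_⟩ : {l : List (Fin (n + 1) × Fin (n + 1)) | l.length ≤ n})) ?_
  · simpa [enc] using len_le x.2
  · intro x y hxy
    apply Subtype.ext
    have h := congrArg (fun z => (Subtype.val z).map (fun q : Fin (n+1) × Fin (n+1) => ((q.1 : ℕ), (q.2 : ℕ)))) hxy
    simpa [enc_dec (bounds x.2), enc_dec (bounds y.2)] using h

instance finPQ (n : ℕ) (Q : List (ℕ × ℕ) → Prop) : Finite {l : List (ℕ × ℕ) // P n l ∧ Q l} := by
  refine Finite.of_injective (fun x => (⟨x.1, x.2.1⟩ : {l : List (ℕ × ℕ) // P n l})) ?_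
  intro a b h
  simp only [Subtype.mk.injEq] at h
  exact Subtype.ext h

end NCAux
namespace NCAux

noncomputable def A (n : ℕ) : ℕ := Nat.card {l : List (ℕ × ℕ) // P n l}

lemma card_split (S Q : List (ℕ × ℕ) → Prop) [Finite {l : List (ℕ × ℕ) // S l}] :
    Nat.card {l : List (ℕ × ℕ) // S l} =
      Nat.card {l : List (ℕ × ℕ) // S l ∧ Q l} + Nat.card {l : List (ℕ × ℕ) // S l ∧ ¬ Q l} := by
  classical
  haveI : Finite {x : {l : List (ℕ × ℕ) // S l} // Q x.1} :=
    Finite.of_injective (fun x => x.1) (fun a b h => Subtype.ext h)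
  haveI : Finite {x : {l : List (ℕ × ℕ) // S l} // ¬ Q x.1} :=
    Finite.of_injective (fun x => x.1) (fun a b h => Subtype.ext h)
  rw [← Nat.card_congr (Equiv.sumCompl fun x : {l : List (ℕ × ℕ) // S l} => Q x.1),
    Nat.card_sum]
  congr 1
  · exact Nat.card_congr (Equiv.subtypeSubtypeEquivSubtypeInter S Q)
  · exact Nat.card_congr (Equiv.subtypeSubtypeEquivSubtypeInter S (fun l => ¬ Q l))

/-- head is (1,1) -/
def Q1 (l : List (ℕ × ℕ)) : Prop := l.head? = some (1, 1)

/-- head has colour < part -/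
def Q2 (l : List (ℕ × ℕ)) : Prop := ∃ p c, l.head? = some (p, c) ∧ c < p

/-- head is diagonal with part ≥ 2 -/
def Q3 (l : List (ℕ × ℕ)) : Prop := ∃ p, l.head? = some (p, p) ∧ 2 ≤ p

/-- head is diagonal -/
def QD (l : List (ℕ × ℕ)) : Prop := ∃ p, l.head? = some (p, p)

def equivQ1 (n : ℕ) : {l : List (ℕ × ℕ) // P (n + 1) l ∧ Q1 l} ≃ {l : List (ℕ × ℕ) // P n l} where
  toFun x := ⟨x.1.tail, by
    obtain ⟨l, hP, hh⟩ := x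
    cases l with
    | nil => simp [Q1] at hh
    | cons a t =>
      simp only [Q1, List.head?_cons, Option.some.injEq] at hh
      subst hh
      obtain ⟨h1, h2, h3, h4⟩ := P_cons hP
      have : (t.map Prod.fst).sum = n := by omega
      rw [this] at h3
      simpa using h3⟩
  invFun y := ⟨(1, 1) :: y.1, by
    refine ⟨?_, rfl⟩
    have := P_cons' (le_refl 1) (le_refl 1) y.2
    rwa [Nat.add_comm] at this⟩
  left_inv x := by
    obtain ⟨l, hP, hh⟩ := x
    cases l with
    | nil => simp [Q1] at hh
    | cons a t =>
      simp only [Q1, List.head?_cons, Option.some.injEq] at hh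
      subst hh
      rfl
  right_inv y := rfl

def equivQ2 (n : ℕ) : {l : List (ℕ × ℕ) // P (n + 2) l ∧ Q2 l} ≃ {l : List (ℕ × ℕ) // P (n + 1) l} where
  toFun x := ⟨match x.1 with
    | [] => []
    | (p, c) :: t => (p - 1, c) :: t, by
    obtain ⟨l, hP, p, c, hh, hlt⟩ := x
    cases l with
    | nil => simp at hh
    | cons a t =>
      simp only [List.head?_cons, Option.some.injEq] at hh
      subst hh
      obtain ⟨h1, h2, h3, h4⟩ := P_cons hP
      have hn : n + 1 = (p - 1) + (t.map Prod.fst).sum := by omega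
      rw [hn]
      exact P_cons' h1 (by omega) h3⟩
  invFun y := ⟨match y.1 with
    | [] => []
    | (p, c) :: t => (p + 1, c) :: t, by
    obtain ⟨l, hP⟩ := y
    cases l with
    | nil => exact absurd rfl (P_ne_nil (by omega) hP)
    | cons a t =>
      obtain ⟨p, c⟩ := a
      obtain ⟨h1, h2, h3, h4⟩ := P_cons hP
      refine ⟨?_, p + 1, c, rfl, by omega⟩
      have hn : n + 2 = (p + 1) + (t.map Prod.fst).sum := by omega
      rw [hn]
      exact P_cons' h1 (by omega) h3⟩
  left_inv x := by
    obtain ⟨l, hP, p, c, hh, hlt⟩ := x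
    cases l with
    | nil => simp at hh
    | cons a t =>
      simp only [List.head?_cons, Option.some.injEq] at hh
      subst hh
      obtain ⟨h1, h2, h3, h4⟩ := P_cons hP
      apply Subtype.ext
      show (p - 1 + 1, c) :: t = (p, c) :: t
      congr 2
      omega
  right_inv y := by
    obtain ⟨l, hP⟩ := y
    cases l with
    | nil => exact absurd rfl (P_ne_nil (by omega) hP)
    | cons a t =>
      obtain ⟨p, c⟩ := a
      apply Subtype.ext
      show (p + 1 - 1, c) :: t = (p, c) :: t
      congr 2

def equivQ3 (n : ℕ) : {l : List (ℕ × ℕ) // P (n + 2) l ∧ Q3 l} ≃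
    {l : List (ℕ × ℕ) // P (n + 1) l ∧ QD l} where
  toFun x := ⟨match x.1 with
    | [] => []
    | (p, c) :: t => (p - 1, c - 1) :: t, by
    obtain ⟨l, hP, p, hh, hp⟩ := x
    cases l with
    | nil => simp at hh
    | cons a t =>
      simp only [List.head?_cons, Option.some.injEq] at hh
      subst hh
      obtain ⟨h1, h2, h3, h4⟩ := P_cons hP
      refine ⟨?_, p - 1, rfl⟩
      have hn : n + 1 = (p - 1) + (t.map Prod.fst).sum := by omega
      rw [hn]
      exact P_cons' (by omega) (by omega) h3⟩
  invFun y := ⟨match y.1 with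
    | [] => []
    | (p, c) :: t => (p + 1, c + 1) :: t, by
    obtain ⟨l, hP, p, hh⟩ := y
    cases l with
    | nil => simp at hh
    | cons a t =>
      simp only [List.head?_cons, Option.some.injEq] at hh
      subst hh
      obtain ⟨h1, h2, h3, h4⟩ := P_cons hP
      refine ⟨?_, p + 1, rfl, by omega⟩
      have hn : n + 2 = (p + 1) + (t.map Prod.fst).sum := by omega
      rw [hn]
      exact P_cons' (by omega) (by omega) h3⟩
  left_inv x := by
    obtain ⟨l, hP, p, hh, hp⟩ := x
    cases l with
    | nil => simp at hh
    | cons a t =>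
      simp only [List.head?_cons, Option.some.injEq] at hh
      subst hh
      apply Subtype.ext
      show (p - 1 + 1, p - 1 + 1) :: t = (p, p) :: t
      congr 2 <;> omega
  right_inv y := by
    obtain ⟨l, hP, p, hh⟩ := y
    cases l with
    | nil => simp at hh
    | cons a t =>
      simp only [List.head?_cons, Option.some.injEq] at hh
      subst hh
      obtain ⟨h1, h2, h3, h4⟩ := P_cons hP
      apply Subtype.ext
      show (p + 1 - 1, p + 1 - 1) :: t = (p, p) :: t
      congr 2 <;> omega

end NCAux
namespace NCAux

lemma cardQ1 (n : ℕ) : Nat.card {l : List (ℕ × ℕ) // P (n + 1) l ∧ Q1 l} = A n :=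
  Nat.card_congr (equivQ1 n)

lemma cardQ2succ (n : ℕ) : Nat.card {l : List (ℕ × ℕ) // P (n + 2) l ∧ Q2 l} = A (n + 1) :=
  Nat.card_congr (equivQ2 n)

lemma cardQ2one : Nat.card {l : List (ℕ × ℕ) // P 1 l ∧ Q2 l} = 0 := by
  haveI : IsEmpty {l : List (ℕ × ℕ) // P 1 l ∧ Q2 l} := by
    refine ⟨?_⟩
    rintro ⟨l, hP, p, c, hh, hlt⟩
    cases l with
    | nil => simp at hh
    | cons a t =>
      simp only [List.head?_cons, Option.some.injEq] at hh
      subst hh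
      obtain ⟨h1, h2, h3, h4⟩ := P_cons hP
      omega
  exact Nat.card_of_isEmpty

lemma notQ2_iff {n : ℕ} {l : List (ℕ × ℕ)} (hP : P (n + 1) l) : ¬ Q2 l ↔ QD l := by
  rcases List.exists_cons_of_ne_nil (P_ne_nil (by omega) hP) with ⟨a, t, rfl⟩
  obtain ⟨p, c⟩ := a
  obtain ⟨h1, h2, h3, h4⟩ := P_cons hP
  constructor
  · intro hn
    refine ⟨p, ?_⟩
    have hcp : c = p := by
      by_contra hne
      exact hn ⟨p, c, rfl, by omega⟩
    rw [hcp]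
    rfl
  · rintro ⟨q, hq⟩ ⟨p', c', hh', hlt⟩
    simp only [List.head?_cons, Option.some.injEq, Prod.mk.injEq] at hq hh'
    omega

lemma cardA_split (n : ℕ) :
    A (n + 1) = Nat.card {l : List (ℕ × ℕ) // P (n + 1) l ∧ Q2 l}
      + Nat.card {l : List (ℕ × ℕ) // P (n + 1) l ∧ QD l} := by
  rw [A, card_split (P (n + 1)) Q2]
  congr 1
  exact Nat.card_congr (Equiv.subtypeEquivRight fun l =>
    and_congr_right fun hP => notQ2_iff hP)

lemma main_split (n : ℕ) :
    A (n + 2) = A (n + 1) + Nat.card {l : List (ℕ × ℕ) // P (n + 2) l ∧ Q2 l}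
      + Nat.card {l : List (ℕ × ℕ) // P (n + 1) l ∧ QD l} := by
  have h1 : A (n + 2) = Nat.card {l : List (ℕ × ℕ) // P (n + 2) l ∧ Q1 l}
      + Nat.card {l : List (ℕ × ℕ) // P (n + 2) l ∧ ¬ Q1 l} :=
    card_split (P (n + 2)) Q1
  have h2 : Nat.card {l : List (ℕ × ℕ) // P (n + 2) l ∧ ¬ Q1 l}
      = Nat.card {l : List (ℕ × ℕ) // (P (n + 2) l ∧ ¬ Q1 l) ∧ Q2 l}
      + Nat.card {l : List (ℕ × ℕ) // (P (n + 2) l ∧ ¬ Q1 l) ∧ ¬ Q2 l} :=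
    card_split (fun l => P (n + 2) l ∧ ¬ Q1 l) Q2
  have e3 : Nat.card {l : List (ℕ × ℕ) // (P (n + 2) l ∧ ¬ Q1 l) ∧ Q2 l}
      = Nat.card {l : List (ℕ × ℕ) // P (n + 2) l ∧ Q2 l} := by
    apply Nat.card_congr (Equiv.subtypeEquivRight _)
    intro l
    constructor
    · rintro ⟨⟨hP, _⟩, hQ2⟩; exact ⟨hP, hQ2⟩
    · rintro ⟨hP, p, c, hh, hlt⟩
      refine ⟨⟨hP, ?_⟩, p, c, hh, hlt⟩
      intro hQ1
      rw [Q1] at hQ1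
      rw [hQ1] at hh
      simp only [Option.some.injEq, Prod.mk.injEq] at hh
      omega
  have e4 : Nat.card {l : List (ℕ × ℕ) // (P (n + 2) l ∧ ¬ Q1 l) ∧ ¬ Q2 l}
      = Nat.card {l : List (ℕ × ℕ) // P (n + 2) l ∧ Q3 l} := by
    apply Nat.card_congr (Equiv.subtypeEquivRight _)
    intro l
    constructor
    · rintro ⟨⟨hP, hn1⟩, hn2⟩
      obtain ⟨p, hp⟩ := (notQ2_iff (n := n + 1) hP).1 hn2
      refine ⟨hP, p, hp, ?_⟩
      rcases List.exists_cons_of_ne_nil (P_ne_nil (by omega) hP) with ⟨a, t, rfl⟩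
      obtain ⟨h1, h2, h3, h4⟩ := P_cons (p := a.1) (c := a.2) (by simpa using hP)
      simp only [List.head?_cons, Option.some.injEq] at hp
      rw [Q1, List.head?_cons] at hn1
      by_contra hlt
      apply hn1
      have : a = (1, 1) := by
        obtain ⟨a1, a2⟩ := a
        simp only [Prod.mk.injEq] at hp ⊢
        omega
      rw [this]
    · rintro ⟨hP, p, hh, hp⟩
      refine ⟨⟨hP, ?_⟩, ?_⟩
      · intro hQ1
        rw [Q1] at hQ1
        rw [hQ1] at hh
        simp only [Option.some.injEq, Prod.mk.injEq] at hh
        omega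
      · rintro ⟨p', c', hh', hlt⟩
        rw [hh'] at hh
        simp only [Option.some.injEq, Prod.mk.injEq] at hh
        omega
  have e5 : Nat.card {l : List (ℕ × ℕ) // P (n + 2) l ∧ Q3 l}
      = Nat.card {l : List (ℕ × ℕ) // P (n + 1) l ∧ QD l} := Nat.card_congr (equivQ3 n)
  rw [h1, h2, e3, e4, e5, cardQ1]
  ring

noncomputable def q (n : ℕ) : ℕ := Nat.card {l : List (ℕ × ℕ) // P (n + 1) l ∧ Q2 l}

lemma recur (n : ℕ) : A (n + 2) + q n = 3 * A (n + 1) := by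
  have h := main_split n
  have h2 := cardA_split n
  have h3 := cardQ2succ n
  rw [q]
  omega

lemma q_zero : q 0 = 0 := cardQ2one

lemma q_succ (n : ℕ) : q (n + 1) = A (n + 1) := cardQ2succ n

lemma P_one_eq {l : List (ℕ × ℕ)} (h : P 1 l) : l = [(1, 1)] := by
  rcases List.exists_cons_of_ne_nil (P_ne_nil (by omega) h) with ⟨a, t, rfl⟩
  obtain ⟨p, c⟩ := a
  obtain ⟨h1, h2, h3, h4⟩ := P_cons h
  have hp : p = 1 := by omega
  have hs : (t.map Prod.fst).sum = 0 := by omega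
  rw [hs] at h3
  rw [eq_nil_of_P_zero h3]
  have : c = 1 := by omega
  rw [hp, this]

lemma A_one : A 1 = 1 := by
  rw [A]
  haveI : Nonempty {l : List (ℕ × ℕ) // P 1 l} :=
    ⟨⟨[(1, 1)], by constructor <;> simp [IsNColourComposition]⟩⟩
  haveI : Subsingleton {l : List (ℕ × ℕ) // P 1 l} :=
    ⟨fun a b => Subtype.ext (by rw [P_one_eq a.2, P_one_eq b.2])⟩
  exact Nat.card_unique

end NCAux
namespace NCAux

lemma half_key {n : ℕ} {l : List (ℕ × ℕ)} (hP : P (2 * n) l) (hrev : l.reverse = l)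
    {k : ℕ} (hk : l.length = k + k) :
    l.drop k = (l.take k).reverse ∧ ((l.take k).map Prod.fst).sum = n := by
  have h1 : l.take k = (l.drop k).reverse := by
    conv_lhs => rw [← hrev]
    rw [List.take_reverse]
    congr 2
    omega
  have hdrop : l.drop k = (l.take k).reverse := by rw [h1, List.reverse_reverse]
  refine ⟨hdrop, ?_⟩
  have h2 : ((l.take k).map Prod.fst).sum + ((l.drop k).map Prod.fst).sum = 2 * n := by
    rw [← List.sum_append, ← List.map_append, List.take_append_drop, hP.2]
  have h3 : ((l.drop k).map Prod.fst).sum = ((l.take k).map Prod.fst).sum := by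
    rw [hdrop, List.map_reverse, List.sum_reverse]
  omega

def halfEquiv (n : ℕ) :
    {l : List (ℕ × ℕ) // P (2 * n) l ∧ l.reverse = l ∧ Even l.length} ≃
      {l : List (ℕ × ℕ) // P n l} where
  toFun x := ⟨x.1.take (x.1.length / 2), by
    obtain ⟨l, hP, hrev, k, hk⟩ := x
    have hl2 : l.length / 2 = k := by omega
    rw [hl2]
    obtain ⟨-, hsum⟩ := half_key hP hrev hk
    exact ⟨fun pc hm => hP.1 pc (List.mem_of_mem_take hm), hsum⟩⟩
  invFun y := ⟨y.1 ++ y.1.reverse, by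
    obtain ⟨m, hm⟩ := y
    refine ⟨⟨?_, ?_⟩, by simp, ⟨m.length, by simp⟩⟩
    · intro pc hmem
      rcases List.mem_append.1 hmem with h | h
      · exact hm.1 pc h
      · exact hm.1 pc (List.mem_reverse.1 h)
    · rw [List.map_append, List.sum_append, List.map_reverse, List.sum_reverse, hm.2]
      omega⟩
  left_inv x := by
    obtain ⟨l, hP, hrev, hev⟩ := x
    obtain ⟨k, hk⟩ := hev
    apply Subtype.ext
    show l.take (l.length / 2) ++ (l.take (l.length / 2)).reverse = l
    have hl2 : l.length / 2 = k := by omega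
    rw [hl2]
    obtain ⟨hdrop, -⟩ := half_key hP hrev hk
    rw [← hdrop, List.take_append_drop]
  right_inv y := by
    apply Subtype.ext
    show (y.1 ++ y.1.reverse).take ((y.1 ++ y.1.reverse).length / 2) = y.1
    have hl : (y.1 ++ y.1.reverse).length / 2 = y.1.length := by
      simp only [List.length_append, List.length_reverse]
      omega
    rw [hl]
    exact List.take_left

end NCAux

theorem selfinverse_even_evenparts_generating_function (b : ℕ → ℕ)
    (hb0 : b 0 = 0)
    (hb : ∀ n, 1 ≤ n → b n = Nat.card {l : List (ℕ × ℕ) //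
        IsNColourComposition (2 * n) l ∧ l.reverse = l ∧ Even l.length}) :
    (1 - 3 * PowerSeries.X + PowerSeries.X ^ 2) *
        PowerSeries.mk (fun n => (b n : ℤ)) = PowerSeries.X := by
  have hbA : ∀ n, 1 ≤ n → b n = NCAux.A n := by
    intro n hn
    rw [hb n hn]
    exact Nat.card_congr (NCAux.halfEquiv n)
  have hb1 : b 1 = 1 := by rw [hbA 1 le_rfl, NCAux.A_one]
  have hrec : ∀ n, b (n + 2) + b n = 3 * b (n + 1) := by
    intro n
    cases n with
    | zero =>
      have key : NCAux.A 2 + NCAux.q 0 = 3 * NCAux.A 1 := NCAux.recur 0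
      rw [NCAux.q_zero] at key
      rw [hbA 2 (by omega), hbA 1 (by omega), hb0]
      omega
    | succ m =>
      have key := NCAux.recur (m + 1)
      rw [NCAux.q_succ] at key
      rw [hbA (m + 3) (by omega), hbA (m + 2) (by omega), hbA (m + 1) (by omega)]
      have e1 : m + 1 + 2 = m + 3 := rfl
      have e2 : m + 1 + 1 = m + 2 := rfl
      rw [e1, e2] at key
      omega
  set B : PowerSeries ℤ := PowerSeries.mk (fun n => (b n : ℤ)) with hB
  have hLHS : (1 - 3 * PowerSeries.X + PowerSeries.X ^ 2) * B
      = B + PowerSeries.X * (PowerSeries.X * B)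
        - (PowerSeries.X * B + PowerSeries.X * B + PowerSeries.X * B) := by ring
  rw [hLHS]
  ext n
  rcases n with _ | _ | n
  · simp [hB, hb0]
  · simp [hB, hb0, hb1, PowerSeries.coeff_succ_X_mul, PowerSeries.coeff_zero_X_mul]
  · have h : b (n + 1 + 1) + b n = 3 * b (n + 1) := hrec n
    simp only [map_sub, map_add, PowerSeries.coeff_succ_X_mul, hB, PowerSeries.coeff_mk,
      PowerSeries.coeff_X]
    have : ¬ (n + 1 + 1 = 1) := by omega
    rw [if_neg this]
    push_cast
    omega
end
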